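/- arXiv:1501.05197 — 4 statements merged into one kernel-verified Lean document; each statement's English description precedes it below -/
import Mathlib

section
/- Let T be a tree and v a regular core of T. Then every subtree of a neighbor of v that contains a regular core must contain a main core. -/
/-!
Take a regular core `w` of the subtree that is farthest from `v`, and let `t` be its neighbor
towards `v`. For every other neighbor `z` of `w`, the subtree of `z` lies farther from `v`, so all
of its cores are small. The two standard legs of a small core contain no cores, so a small core
has cores in at most one of its branches. Two distinct cores in the subtree of `z` would make
their lowest common ancestor (seen from `z`) a small core with cores both in its branch towards
`w` and in a branch away from it. Hence that subtree contains at most one core and is a g-leg.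
A core all of whose neighbors but one span g-legs is not minor: it has at least two g-legs, and
in case (ii) a fourth neighbor would span a modified leg or a third standard leg.
-/

open SimpleGraph

variable {V : Type*} [Fintype V] [DecidableEq V]

/-- A vertex `τ` separates `u` and `w` if its distances to them differ. -/
def Separates (T : SimpleGraph V) (τ u w : V) : Prop :=
  T.dist τ u ≠ T.dist τ w

/-- There are at least two vertices of `L` separating `u` and `w`. -/
def HasTwoSeparators (T : SimpleGraph V) (L : Set V) (u w : V) : Prop :=
  ∃ τ₁ ∈ L, ∃ τ₂ ∈ L, τ₁ ≠ τ₂ ∧ Separates T τ₁ u w ∧ Separates T τ₂ u w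

/-- `L` is a landmark set (non-landmarks model, `k = 2`): every pair of distinct
vertices outside `L` is separated by at least two vertices of `L`. -/
def IsLandmarkSet (T : SimpleGraph V) (L : Set V) : Prop :=
  ∀ u w : V, u ≠ w → u ∉ L → w ∉ L → HasTwoSeparators T L u w

/-- A core is a vertex of degree at least 3. -/
def IsCore (T : SimpleGraph V) [DecidableRel T.Adj] (v : V) : Prop :=
  3 ≤ T.degree v

/-- The subtree of the neighbor `x` of `v`: in a tree, the connected component of `x`
obtained by removing `v`, characterized via distances (`w` is in it iff the path from
`v` to `w` passes through `x`). -/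
def Branch (T : SimpleGraph V) (v x : V) : Set V :=
  {w | T.dist v w = T.dist x w + 1}

/-- The subtree of the neighbor `x` of `v` is a (standard) leg:
a path containing no cores. -/
def IsStandardLeg (T : SimpleGraph V) [DecidableRel T.Adj] (v x : V) : Prop :=
  T.Adj v x ∧ ∀ w ∈ Branch T v x, T.degree w ≤ 2

/-- A short leg consists of a single vertex. -/
def IsShortLeg (T : SimpleGraph V) [DecidableRel T.Adj] (v x : V) : Prop :=
  IsStandardLeg T v x ∧ Branch T v x = {x}

/-- A long leg is a standard leg that is not short. -/
def IsLongLeg (T : SimpleGraph V) [DecidableRel T.Adj] (v x : V) : Prop :=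
  IsStandardLeg T v x ∧ Branch T v x ≠ {x}

/-- A small core: degree exactly 3, with at least two standard legs, one of which is short. -/
def IsSmallCore (T : SimpleGraph V) [DecidableRel T.Adj] (v : V) : Prop :=
  T.degree v = 3 ∧ ∃ x y : V, x ≠ y ∧ IsShortLeg T v x ∧ IsStandardLeg T v y

/-- A regular core is a core that is not small. -/
def IsRegularCore (T : SimpleGraph V) [DecidableRel T.Adj] (v : V) : Prop :=
  IsCore T v ∧ ¬ IsSmallCore T v

/-- A modified leg of `v`: a subtree of a neighbor of `v` containing exactly one core,
which is a small core. -/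
def IsModifiedLeg (T : SimpleGraph V) [DecidableRel T.Adj] (v x : V) : Prop :=
  T.Adj v x ∧ ∃ u ∈ Branch T v x, IsSmallCore T u ∧
    ∀ w ∈ Branch T v x, IsCore T w → w = u

/-- A g-leg is a standard leg or a modified leg. -/
def IsGLeg (T : SimpleGraph V) [DecidableRel T.Adj] (v x : V) : Prop :=
  IsStandardLeg T v x ∨ IsModifiedLeg T v x

/-- A minor core: a regular core which either (i) has at most one g-leg, or
(ii) has degree at least 4, no modified legs, exactly two standard legs one of which
is short, and every other subtree of a neighbor contains a regular core. -/
def IsMinorCore (T : SimpleGraph V) [DecidableRel T.Adj] (v : V) : Prop :=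
  IsRegularCore T v ∧
  ((∀ x y : V, IsGLeg T v x → IsGLeg T v y → x = y) ∨
   (4 ≤ T.degree v ∧ (∀ x : V, ¬ IsModifiedLeg T v x) ∧
    (∃ x y : V, x ≠ y ∧ IsShortLeg T v x ∧ IsStandardLeg T v y ∧
      ∀ z : V, IsStandardLeg T v z → z = x ∨ z = y) ∧
    (∀ z : V, T.Adj v z → ¬ IsGLeg T v z → ∃ w ∈ Branch T v z, IsRegularCore T w)))

/-- A main core is a regular core that is not minor. -/
def IsMainCore (T : SimpleGraph V) [DecidableRel T.Adj] (v : V) : Prop :=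
  IsRegularCore T v ∧ ¬ IsMinorCore T v

/-- The vertices lying on g-legs of `v`. -/
def GLegVerts (T : SimpleGraph V) [DecidableRel T.Adj] (v : V) : Set V :=
  {w | ∃ x : V, IsGLeg T v x ∧ w ∈ Branch T v x}

/-- Type (s,0) solution on the leg of neighbor `x` of `v`: the empty set. -/
def SolS0 (T : SimpleGraph V) (v x : V) (S : Set V) : Prop :=
  S ∩ Branch T v x = ∅

/-- Type (s,1) solution: one vertex of the leg whose position is at least 2. -/
def SolS1 (T : SimpleGraph V) (v x : V) (S : Set V) : Prop :=
  ∃ w : V, S ∩ Branch T v x = {w} ∧ 2 ≤ T.dist v w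

/-- Type (s,2) solution: at least two vertices of the leg. -/
def SolS2 (T : SimpleGraph V) (v x : V) (S : Set V) : Prop :=
  ∃ w₁ ∈ S ∩ Branch T v x, ∃ w₂ ∈ S ∩ Branch T v x, w₁ ≠ w₂

/-- Type (s,3) solution: exactly the vertex with position 1 (that is, `x`). -/
def SolS3 (T : SimpleGraph V) (v x : V) (S : Set V) : Prop :=
  S ∩ Branch T v x = {x}

/-- For a modified leg `x` of `v`: `u` is its small core (at position `T.dist v u`),
and `a`, `b` are the two vertices at position `T.dist v u + 1`, where `b` is the
vertex of a short leg of `u` (the vertex `ℓ^b`) and `a` is the other one (`ℓ^a`). -/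
def MLegPair (T : SimpleGraph V) [DecidableRel T.Adj] (v x u a b : V) : Prop :=
  u ∈ Branch T v x ∧ IsSmallCore T u ∧ a ≠ b ∧
  a ∈ Branch T v x ∧ b ∈ Branch T v x ∧
  T.dist v a = T.dist v u + 1 ∧ T.dist v b = T.dist v u + 1 ∧
  IsShortLeg T u b

/-- Type (m,1) solution on the modified leg `x` of `v`: either `{ℓ^a}` or `{ℓ^b}`. -/
def SolM1 (T : SimpleGraph V) [DecidableRel T.Adj] (v x : V) (S : Set V) : Prop :=
  ∃ u a b : V, MLegPair T v x u a b ∧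
    (S ∩ Branch T v x = {a} ∨ S ∩ Branch T v x = {b})

/-- Type (m,2) solution: contains neither `ℓ^a` nor `ℓ^b`, contains at least two
vertices of positions at least `i + 2`, and no vertex of position `i + 1`. -/
def SolM2 (T : SimpleGraph V) [DecidableRel T.Adj] (v x : V) (S : Set V) : Prop :=
  ∃ u a b : V, MLegPair T v x u a b ∧ a ∉ S ∧ b ∉ S ∧
    (∃ w₁ ∈ S ∩ Branch T v x, ∃ w₂ ∈ S ∩ Branch T v x, w₁ ≠ w₂ ∧
      T.dist v u + 2 ≤ T.dist v w₁ ∧ T.dist v u + 2 ≤ T.dist v w₂) ∧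
    ∀ w ∈ S ∩ Branch T v x, T.dist v w ≠ T.dist v u + 1

/-- Type (m,3) solution: at least two vertices, one of which is `ℓ^a` or `ℓ^b`. -/
def SolM3 (T : SimpleGraph V) [DecidableRel T.Adj] (v x : V) (S : Set V) : Prop :=
  ∃ u a b : V, MLegPair T v x u a b ∧
    (∃ w₁ ∈ S ∩ Branch T v x, ∃ w₂ ∈ S ∩ Branch T v x, w₁ ≠ w₂) ∧
    (a ∈ S ∨ b ∈ S)

/-- `S` is a local set for the core `v`. -/
def IsLocalSet (T : SimpleGraph V) [DecidableRel T.Adj] (v : V) (S : Set V) : Prop :=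
  S ⊆ GLegVerts T v ∧
  -- (1) at most one standard leg has a type (s,0) solution, and every standard leg
  -- has a solution of one of the types (s,0), (s,1), (s,2), (s,3)
  (∀ x y : V, IsStandardLeg T v x → IsStandardLeg T v y → x ≠ y →
    SolS0 T v x S → SolS0 T v y S → False) ∧
  (∀ x : V, IsStandardLeg T v x →
    SolS0 T v x S ∨ SolS1 T v x S ∨ SolS2 T v x S ∨ SolS3 T v x S) ∧
  -- (2) every modified leg has a solution of type (m,1), (m,2) or (m,3)
  (∀ x : V, IsModifiedLeg T v x →
    SolM1 T v x S ∨ SolM2 T v x S ∨ SolM3 T v x S) ∧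
  -- (3) if some standard leg has a type (s,0) solution, no modified leg has type (m,1)
  ((∃ x : V, IsStandardLeg T v x ∧ SolS0 T v x S) →
    ∀ y : V, IsModifiedLeg T v y → ¬ SolM1 T v y S) ∧
  -- (4) if some long leg has a type (s,0) solution, every other long leg has type (s,2)
  (∀ x : V, IsLongLeg T v x → SolS0 T v x S →
    ∀ y : V, IsLongLeg T v y → y ≠ x → SolS2 T v y S) ∧
  -- (5) if some short leg has a type (s,0) solution, every long leg has type (s,2) or (s,3)
  ((∃ x : V, IsShortLeg T v x ∧ SolS0 T v x S) →
    ∀ y : V, IsLongLeg T v y → SolS2 T v y S ∨ SolS3 T v y S)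

/-- A local set is thrifty if its solutions of types (s,2), (m,2) and (m,3)
consist of exactly two vertices each. -/
def IsThrifty (T : SimpleGraph V) [DecidableRel T.Adj] (v : V) (S : Set V) : Prop :=
  (∀ x : V, IsStandardLeg T v x → SolS2 T v x S → (S ∩ Branch T v x).ncard = 2) ∧
  (∀ x : V, IsModifiedLeg T v x → (SolM2 T v x S ∨ SolM3 T v x S) →
    (S ∩ Branch T v x).ncard = 2)

namespace SimpleGraph

variable {α : Type*} {G : SimpleGraph α}

theorem mem_branch {v x w : α} : w ∈ Branch G v x ↔ G.dist v w = G.dist x w + 1 := Iff.rfl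

theorem ne_of_mem_branch {v x w : α} (hw : w ∈ Branch G v x) : v ≠ w := by
  rintro rfl
  simp [mem_branch] at hw

theorem Connected.exists_adj_dist_add_one_eq (hG : G.Connected) {a w : α} (hne : a ≠ w) :
    ∃ t, G.Adj w t ∧ G.dist a t + 1 = G.dist a w := by
  obtain ⟨p, hp⟩ := hG.exists_walk_length_eq_dist w a
  have hnil : ¬ p.Nil := by
    rw [Walk.not_nil_iff_lt_length, hp]
    exact hG.pos_dist_of_ne hne.symm
  refine ⟨p.snd, p.adj_snd hnil, ?_⟩
  have htail : G.dist p.snd a ≤ p.tail.length := dist_le _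
  have hlen := p.length_tail_add_one hnil
  have htri : G.dist w a ≤ G.dist w p.snd + G.dist p.snd a := hG.dist_triangle
  have hsnd : G.dist w p.snd = 1 := dist_eq_one_iff_adj.2 (p.adj_snd hnil)
  rw [dist_comm (u := a), dist_comm (u := a)]
  omega

theorem Connected.exists_adj_geodesic_step (hG : G.Connected) {r c u : α} (hne : c ≠ u)
    (hc : G.dist r c + G.dist c u = G.dist r u) :
    ∃ n, G.Adj c n ∧ u ∈ Branch G c n ∧ G.dist r n = G.dist r c + 1 ∧
      G.dist r n + G.dist n u = G.dist r u := by
  obtain ⟨n, hcn, hn⟩ := hG.exists_adj_dist_add_one_eq hne.symm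
  have hrn : G.dist r n ≤ G.dist r c + G.dist c n := hcn.reachable.dist_triangle_right r
  have hru : G.dist r u ≤ G.dist r n + G.dist n u := hG.dist_triangle
  have hcn1 : G.dist c n = 1 := dist_eq_one_iff_adj.2 hcn
  rw [dist_comm (u := u), dist_comm (u := u)] at hn
  exact ⟨n, hcn, by rw [mem_branch]; omega, by omega, by omega⟩

theorem Walk.dist_add_dist_of_mem_support {a b c : α} (p : G.Walk a b)
    (hp : p.length = G.dist a b) (hc : c ∈ p.support) :
    G.dist a c + G.dist c b = G.dist a b := by
  classical
  have htake := dist_le (p.takeUntil c hc)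
  have hdrop := dist_le (p.dropUntil c hc)
  have hsplit := congrArg Walk.length (p.take_spec hc)
  have htri := (p.takeUntil c hc).reachable.dist_triangle_left b
  rw [Walk.length_append] at hsplit
  omega

theorem IsTree.length_eq_dist_of_isPath (hT : G.IsTree) {a b : α} {p : G.Walk a b}
    (hp : p.IsPath) : p.length = G.dist a b := by
  obtain ⟨q, hq, hql⟩ := hT.connected.exists_path_of_dist a b
  rw [← hql, (hT.existsUnique_path a b).unique hp hq]

theorem Connected.mem_branch_of_between (hG : G.Connected) {a b c u : α} (hab : G.Adj a b)
    (hu : u ∈ Branch G a b) (hc : G.dist b c + G.dist c u = G.dist b u) : c ∈ Branch G a b := by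
  have hac : G.dist a c ≤ G.dist a b + G.dist b c := hab.reachable.dist_triangle_left c
  have hau : G.dist a u ≤ G.dist a c + G.dist c u := hG.dist_triangle
  have hab1 : G.dist a b = 1 := dist_eq_one_iff_adj.2 hab
  rw [mem_branch] at hu ⊢
  omega

theorem Connected.mem_branch_of_beyond (hG : G.Connected) {a b c u : α} (hab : G.Adj a b)
    (hc : c ∈ Branch G a b) (hu : G.dist a u = G.dist a c + G.dist c u) : u ∈ Branch G a b := by
  have hbu : G.dist b u ≤ G.dist b c + G.dist c u := hG.dist_triangle
  have hau : G.dist a u ≤ G.dist a b + G.dist b u := hab.reachable.dist_triangle_left u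
  have hab1 : G.dist a b = 1 := dist_eq_one_iff_adj.2 hab
  rw [mem_branch] at hc ⊢
  omega

/-- A geodesic to `w`, the edge `w z` and a geodesic from `z` make up a path, hence a geodesic
in a tree. -/
theorem IsTree.dist_eq_dist_add_dist_of_mem_branch (hT : G.IsTree) {v w z u : α}
    (hwz : G.Adj w z) (hv : G.dist v z = G.dist v w + 1) (hu : u ∈ Branch G w z) :
    G.dist v u = G.dist v w + G.dist w u := by
  obtain ⟨p, hp, hpl⟩ := hT.connected.exists_path_of_dist v w
  obtain ⟨q, hq, hql⟩ := hT.connected.exists_path_of_dist z u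
  have hdisj : ∀ y ∈ p.support, ∀ y' ∈ q.support, y ≠ y' := by
    rintro y hyp y hyq rfl
    have hvy := p.dist_add_dist_of_mem_support hpl hyp
    have hwy := hT.connected.mem_branch_of_between hwz hu (q.dist_add_dist_of_mem_support hql hyq)
    have htri : G.dist v z ≤ G.dist v y + G.dist y z := hT.connected.dist_triangle
    rw [mem_branch] at hwy
    rw [dist_comm (u := y) (v := z)] at htri
    rw [dist_comm (u := y) (v := w)] at hvy
    omega
  have hpath : (p.append (Walk.cons hwz q)).IsPath := by
    rw [Walk.isPath_def, Walk.support_append, Walk.support_cons, List.tail_cons,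
      List.nodup_append]
    exact ⟨hp.support_nodup, hq.support_nodup, hdisj⟩
  have hlen := hT.length_eq_dist_of_isPath hpath
  rw [Walk.length_append, Walk.length_cons] at hlen
  rw [mem_branch] at hu
  omega

theorem IsTree.eq_of_adj_of_dist_add_one_eq (hT : G.IsTree) {v w t z : α} (ht : G.Adj w t)
    (hz : G.Adj w z) (hvt : G.dist v t + 1 = G.dist v w) (hvz : G.dist v z + 1 = G.dist v w) :
    t = z := by
  by_contra hne
  have hzw : G.dist z w = 1 := dist_eq_one_iff_adj.2 hz.symm
  have hzt : G.dist z t = G.dist z w + 1 := by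
    refine (hT.dist_eq_dist_add_one_of_adj z ht).resolve_left fun h => hne ?_
    exact ((hT.connected.dist_eq_zero_iff).1 (by omega : G.dist z t = 0)).symm
  have hvB : v ∈ Branch G w t := by
    rw [mem_branch, dist_comm (u := w), dist_comm (u := t)]
    omega
  have hzv := hT.dist_eq_dist_add_dist_of_mem_branch ht hzt hvB
  rw [dist_comm (u := z) (v := v), dist_comm (u := w) (v := v)] at hzv
  omega

section Degree

variable {w : α} [Fintype (G.neighborSet w)]

theorem card_le_degree_of_forall_adj {s : Finset α} (hs : ∀ z ∈ s, G.Adj w z) :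
    s.card ≤ G.degree w := by
  rw [← card_neighborFinset_eq_degree]
  exact Finset.card_le_card fun z hz => (mem_neighborFinset _ _ _).2 (hs z hz)

theorem exists_adj_notMem_of_card_lt_degree {s : Finset α} (hs : s.card < G.degree w) :
    ∃ z, G.Adj w z ∧ z ∉ s := by
  by_contra! h
  rw [← card_neighborFinset_eq_degree] at hs
  exact (Finset.card_le_card fun z hz => h z ((mem_neighborFinset _ _ _).1 hz)).not_gt hs

end Degree

end SimpleGraph

section Cores

variable {α : Type*} [Fintype α] {T : SimpleGraph α} [DecidableRel T.Adj]

theorem IsStandardLeg.not_isCore_of_mem_branch {c m s : α} (hm : IsStandardLeg T c m)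
    (hs : s ∈ Branch T c m) : ¬ IsCore T s := fun hsc => by
  have := hm.2 s hs
  unfold IsCore at hsc
  omega

theorem IsSmallCore.eq_of_isCore_mem_branch {c n n' r r' : α} (hc : IsSmallCore T c)
    (hn : T.Adj c n) (hn' : T.Adj c n') (hr : r ∈ Branch T c n) (hr' : r' ∈ Branch T c n')
    (hrc : IsCore T r) (hrc' : IsCore T r') : n = n' := by
  classical
  obtain ⟨hdeg, x, y, hxy, hx, hy⟩ := hc
  have hnx : n ≠ x := by rintro rfl; exact hx.1.not_isCore_of_mem_branch hr hrc
  have hny : n ≠ y := by rintro rfl; exact hy.not_isCore_of_mem_branch hr hrc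
  have hn'x : n' ≠ x := by rintro rfl; exact hx.1.not_isCore_of_mem_branch hr' hrc'
  have hn'y : n' ≠ y := by rintro rfl; exact hy.not_isCore_of_mem_branch hr' hrc'
  have hnbrs : T.neighborFinset c = {x, y, n} := by
    refine (Finset.eq_of_subset_of_card_le (fun m hm => ?_) ?_).symm
    · simp only [Finset.mem_insert, Finset.mem_singleton] at hm
      rcases hm with rfl | rfl | rfl <;> simp [hx.1.1, hy.1, hn]
    · rw [card_neighborFinset_eq_degree, hdeg,
        Finset.card_eq_three.2 ⟨x, y, n, hxy, hnx.symm, hny.symm, rfl⟩]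
  have hmem := (mem_neighborFinset T c n').2 hn'
  simp only [hnbrs, Finset.mem_insert, Finset.mem_singleton, hn'x, hn'y, false_or] at hmem
  exact hmem.symm

theorem IsSmallCore.not_isCore_of_between (hG : T.Connected) {w z c r : α} (hc : IsSmallCore T c)
    (hw : IsCore T w) (hwz : T.Adj w z) (hcB : c ∈ Branch T w z) (hrB : r ∈ Branch T w z)
    (hcr : c ≠ r) (hbetween : T.dist z c + T.dist c r = T.dist z r) : ¬ IsCore T r := by
  intro hr
  obtain ⟨n, hcn, hnr, hzn, hznr⟩ := hG.exists_adj_geodesic_step hcr hbetween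
  have hnB := hG.mem_branch_of_between hwz hrB hznr
  obtain ⟨p, hcp, hwp⟩ := hG.exists_adj_dist_add_one_eq (ne_of_mem_branch hcB)
  have hwpB : w ∈ Branch T c p := by
    rw [mem_branch, dist_comm, dist_comm (u := p)]
    omega
  obtain rfl := hc.eq_of_isCore_mem_branch hcp hcn hwpB hnr hw hr
  rw [mem_branch] at hcB hnB
  omega

theorem SimpleGraph.Connected.eq_of_isCore_of_mem_branch (hG : T.Connected) {w z u u' : α}
    (hw : IsCore T w) (hwz : T.Adj w z) (hsmall : ∀ r ∈ Branch T w z, IsCore T r → IsSmallCore T r)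
    (hu : u ∈ Branch T w z) (hu' : u' ∈ Branch T w z) (huc : IsCore T u) (huc' : IsCore T u') :
    u = u' := by
  classical
  by_contra hne
  -- `c` plays the role of the lowest common ancestor of `u` and `u'` for the root `z`
  obtain ⟨c, ⟨hcu, hcu'⟩, hmax⟩ := Set.exists_max_image
    {c | T.dist z c + T.dist c u = T.dist z u ∧ T.dist z c + T.dist c u' = T.dist z u'}
    (T.dist z) (Set.toFinite _) ⟨z, by simp⟩
  have hcB := hG.mem_branch_of_between hwz hu hcu
  suffices hcore : IsCore T c ∧ (c ≠ u ∨ c ≠ u') by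
    obtain ⟨hc, hcu_ne | hcu'_ne⟩ := hcore
    · exact (hsmall c hcB hc).not_isCore_of_between hG hw hwz hcB hu hcu_ne hcu huc
    · exact (hsmall c hcB hc).not_isCore_of_between hG hw hwz hcB hu' hcu'_ne hcu' huc'
  by_cases hcu_eq : c = u
  · exact ⟨hcu_eq ▸ huc, Or.inr (hcu_eq ▸ hne)⟩
  by_cases hcu'_eq : c = u'
  · exact ⟨hcu'_eq ▸ huc', Or.inl hcu_eq⟩
  refine ⟨?_, Or.inl hcu_eq⟩
  obtain ⟨n, hcn, -, hzn, hnu⟩ := hG.exists_adj_geodesic_step hcu_eq hcu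
  obtain ⟨n', hcn', -, hzn', hnu'⟩ := hG.exists_adj_geodesic_step hcu'_eq hcu'
  have hnn' : n ≠ n' := by
    rintro rfl
    have hdeeper := hmax n ⟨hnu, hnu'⟩
    omega
  obtain ⟨p, hcp, hwp⟩ := hG.exists_adj_dist_add_one_eq (ne_of_mem_branch hcB)
  have hnB := hG.mem_branch_of_between hwz hu hnu
  have hnB' := hG.mem_branch_of_between hwz hu' hnu'
  rw [mem_branch] at hcB hnB hnB'
  have hpn : p ≠ n := by rintro rfl; omega
  have hpn' : p ≠ n' := by rintro rfl; omega
  calc 3 = ({p, n, n'} : Finset α).card :=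
        (Finset.card_eq_three.2 ⟨p, n, n', hpn, hpn', hnn', rfl⟩).symm
    _ ≤ T.degree c := card_le_degree_of_forall_adj (by simp [hcp, hcn, hcn'])

theorem SimpleGraph.Connected.isGLeg_of_forall_isSmallCore (hG : T.Connected) {w z : α}
    (hw : IsCore T w) (hwz : T.Adj w z)
    (hsmall : ∀ r ∈ Branch T w z, IsCore T r → IsSmallCore T r) : IsGLeg T w z := by
  by_cases hcore : ∃ u ∈ Branch T w z, IsCore T u
  · obtain ⟨u, hu, huc⟩ := hcore
    exact Or.inr ⟨hwz, u, hu, hsmall u hu huc,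
      fun r hr hrc => hG.eq_of_isCore_of_mem_branch hw hwz hsmall hr hu hrc huc⟩
  · push Not at hcore
    exact Or.inl ⟨hwz, fun r hr => Nat.le_of_lt_succ (not_le.1 (hcore r hr))⟩

theorem not_isMinorCore_of_forall_isGLeg {w t : α} (hw : IsCore T w)
    (hg : ∀ z, T.Adj w z → z ≠ t → IsGLeg T w z) : ¬ IsMinorCore T w := by
  classical
  rintro ⟨-, hatMostOne | ⟨hdeg, hnomod, ⟨x, y, -, -, -, hxy⟩, -⟩⟩
  · obtain ⟨z₁, hz₁, hz₁t⟩ := exists_adj_notMem_of_card_lt_degree (s := {t})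
      ((Finset.card_singleton t).trans_lt (lt_of_lt_of_le (by norm_num) hw))
    obtain ⟨z₂, hz₂, hz₂s⟩ := exists_adj_notMem_of_card_lt_degree (s := {t, z₁})
      (Finset.card_le_two.trans_lt hw)
    simp only [Finset.mem_insert, Finset.mem_singleton, not_or] at hz₁t hz₂s
    exact hz₂s.2 (hatMostOne _ _ (hg _ hz₂ hz₂s.1) (hg _ hz₁ hz₁t))
  · obtain ⟨z, hz, hzs⟩ := exists_adj_notMem_of_card_lt_degree (s := {t, x, y})
      (Finset.card_le_three.trans_lt hdeg)
    simp only [Finset.mem_insert, Finset.mem_singleton, not_or] at hzs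
    rcases hg z hz hzs.1 with hstd | hmod
    · rcases hxy z hstd with rfl | rfl
      exacts [hzs.2.1 rfl, hzs.2.2 rfl]
    · exact hnomod z hmod

end Cores

theorem subtree_with_regular_core_has_main_core_general
    (T : SimpleGraph V) [DecidableRel T.Adj] (hT : T.IsTree)
    (v : V) :
    ∀ x : V, T.Adj v x → (∃ w ∈ Branch T v x, IsRegularCore T w) →
      ∃ w ∈ Branch T v x, IsMainCore T w := by
  rintro x hvx ⟨w₀, hw₀⟩
  obtain ⟨w, ⟨hwx, hwreg⟩, hmax⟩ := Set.exists_max_image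
    {u | u ∈ Branch T v x ∧ IsRegularCore T u} (T.dist v) (Set.toFinite _) ⟨w₀, hw₀⟩
  refine ⟨w, hwx, hwreg, ?_⟩
  obtain ⟨t, hwt, hvt⟩ := hT.connected.exists_adj_dist_add_one_eq (ne_of_mem_branch hwx)
  refine not_isMinorCore_of_forall_isGLeg hwreg.1 (t := t) fun z hwz hzt => ?_
  have hvz : T.dist v z = T.dist v w + 1 :=
    (hT.dist_eq_dist_add_one_of_adj v hwz).resolve_left fun h =>
      hzt (hT.eq_of_adj_of_dist_add_one_eq hwt hwz hvt h.symm).symm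
  refine hT.connected.isGLeg_of_forall_isSmallCore hwreg.1 hwz fun u hu huc => ?_
  have hvu := hT.dist_eq_dist_add_dist_of_mem_branch hwz hvz hu
  have hux := hT.connected.mem_branch_of_beyond hvx hwx hvu
  by_contra hns
  have hfar := hmax u ⟨hux, huc, hns⟩
  rw [mem_branch] at hu
  omega

/-- every subtree of a neighbor of a regular core that contains a
regular core must contain a main core. -/
theorem subtree_with_regular_core_has_main_core
    (T : SimpleGraph V) [DecidableRel T.Adj] (hT : T.IsTree)
    (v : V) (hv : IsRegularCore T v) :
    ∀ x : V, T.Adj v x → (∃ w ∈ Branch T v x, IsRegularCore T w) →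
      ∃ w ∈ Branch T v x, IsMainCore T w :=
  subtree_with_regular_core_has_main_core_general T hT v
end

section
/- Let T be a tree that has at least one minor core. Then T has at least two main cores. -/
open SimpleGraph

variable {V : Type*} [Fintype V] [DecidableEq V]

/-!
Every neighbour branch of a core is a g-leg or contains a regular core: walking away from the
core, the first core met is regular, or it is small and the branch is a modified leg. A minor core
therefore has two neighbours whose branches hold regular cores. A regular core that is not main is
minor, so one of its own non-g-leg branches points away from where we came from and again holds a
regular core; the branches shrink, so this descent ends at a main core. Branches at distinct
neighbours are disjoint, so the two main cores differ.
-/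

section Branch

variable {α : Type*} {T : SimpleGraph α} {a b v w x y : α}

lemma mem_branch_self (h : T.Adj v x) : x ∈ Branch T v x := by
  simp [Branch, dist_eq_one_iff_adj.2 h]

lemma self_notMem_branch : v ∉ Branch T v x := by
  simp [Branch]

lemma notMem_branch_iff (hT : T.IsTree) (h : T.Adj v x) :
    w ∉ Branch T v x ↔ w ∈ Branch T x v := by
  have := hT.dist_eq_dist_add_one_of_adj w h
  simp only [Branch, Set.mem_ofPred_eq, dist_comm (u := w)] at this ⊢
  omega

lemma exists_adj_mem_branch (hT : T.Connected) (h : v ≠ w) :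
    ∃ x, T.Adj v x ∧ w ∈ Branch T v x := by
  obtain ⟨p, hp, hpl⟩ := (hT v w).exists_path_of_dist
  cases p with
  | nil => exact absurd rfl h
  | @cons _ x _ hx q =>
    refine ⟨x, hx, ?_⟩
    have h₁ : T.dist x w ≤ q.length := dist_le q
    have h₂ : T.dist v w ≤ T.dist v x + T.dist x w := hT.dist_triangle
    rw [dist_eq_one_iff_adj.2 hx] at h₂
    rw [Walk.length_cons] at hpl
    change T.dist v w = T.dist x w + 1
    omega

lemma disjoint_branch (hT : T.IsAcyclic) (hx : T.Adj v x) (hy : T.Adj v y) (hxy : x ≠ y) :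
    Disjoint (Branch T v x) (Branch T v y) := by
  refine Set.disjoint_left.2 fun w hwx hwy => hxy ?_
  -- a geodesic from `v` to `w` through either neighbour is the unique path, so `x = y`
  have geodesic : ∀ {z}, T.Adj v z → w ∈ Branch T v z →
      ∃ p : T.Walk v w, p.IsPath ∧ p.snd = z := by
    intro z hz (hw : T.dist v w = T.dist z w + 1)
    have hvw : T.Reachable v w := Reachable.of_dist_ne_zero (by omega)
    obtain ⟨q, -, hq⟩ := (hz.reachable.symm.trans hvw).exists_path_of_dist
    have hlen : (Walk.cons hz q).length = T.dist v w := by rw [Walk.length_cons, hq, hw]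
    exact ⟨_, (Walk.cons hz q).isPath_of_length_eq_dist hlen, by simp⟩
  obtain ⟨p, hp, rfl⟩ := geodesic hx hwx
  obtain ⟨q, hq, rfl⟩ := geodesic hy hwy
  have hpq : p = q := congrArg Subtype.val ((hT.subsingleton_path v w).elim ⟨p, hp⟩ ⟨q, hq⟩)
  rw [hpq]

lemma branch_subset_branch (hT : T.IsTree) (hab : T.Adj a b) (hby : T.Adj b y) (hya : y ≠ a) :
    Branch T b y ⊆ Branch T a b := fun _ hw =>
  (notMem_branch_iff hT hab.symm).1 fun hw' =>
    Set.disjoint_left.1 (disjoint_branch hT.isAcyclic hby hab.symm hya) hw hw'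

lemma ncard_branch_lt_ncard_branch [Finite α] (hT : T.IsTree) (hab : T.Adj a b)
    (hby : T.Adj b y) (hya : y ≠ a) : (Branch T b y).ncard < (Branch T a b).ncard :=
  Set.ncard_lt_ncard ((branch_subset_branch hT hab hby hya).ssubset_of_mem_notMem
    (mem_branch_self hab) self_notMem_branch)

lemma exists_adj_ne_mem_branch (hT : T.IsTree) (hab : T.Adj a b) (hw : w ∈ Branch T a b)
    (hwb : w ≠ b) : ∃ y, T.Adj b y ∧ y ≠ a ∧ w ∈ Branch T b y := by
  obtain ⟨y, hby, hwy⟩ := exists_adj_mem_branch hT.connected hwb.symm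
  refine ⟨y, hby, ?_, hwy⟩
  rintro rfl
  exact (notMem_branch_iff hT hab).2 hwy hw

end Branch

section Cores

variable {α : Type*} [Fintype α] {T : SimpleGraph α} [DecidableRel T.Adj] {a b v w x y : α}

lemma adj_mem_of_degree_le_card {s : Finset α} (hs : ∀ y ∈ s, T.Adj v y)
    (hdeg : T.degree v ≤ s.card) (hy : T.Adj v y) : y ∈ s := by
  have : s = T.neighborFinset v :=
    Finset.eq_of_subset_of_card_le (fun z hz => (mem_neighborFinset _ _ _).2 (hs z hz))
      (by rwa [card_neighborFinset_eq_degree])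
  exact this ▸ (mem_neighborFinset _ _ _).2 hy

lemma IsStandardLeg.not_isCore (hx : IsStandardLeg T v x) (hw : w ∈ Branch T v x) :
    ¬ IsCore T w := by
  have := hx.2 w hw
  unfold IsCore
  omega

lemma isModifiedLeg_of_isSmallCore (hT : T.IsTree) (hab : T.Adj a b)
    (hc : ∃ c ∈ Branch T b a, IsCore T c) (hb : IsSmallCore T b) : IsModifiedLeg T a b := by
  classical
  obtain ⟨hdeg, x₁, x₂, hx₁₂, hx₁, hx₂⟩ := hb
  obtain ⟨c, hcb, hcc⟩ := hc
  have ha₁ : a ≠ x₁ := by rintro rfl; exact hx₁.1.not_isCore hcb hcc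
  have ha₂ : a ≠ x₂ := by rintro rfl; exact hx₂.not_isCore hcb hcc
  refine ⟨hab, b, mem_branch_self hab, ⟨hdeg, x₁, x₂, hx₁₂, hx₁, hx₂⟩, fun w hw hwc => ?_⟩
  by_contra hwb
  obtain ⟨y, hby, hya, hwy⟩ := exists_adj_ne_mem_branch hT hab hw hwb
  have : y ∈ ({a, x₁, x₂} : Finset α) := by
    refine adj_mem_of_degree_le_card ?_ ?_ hby
    · simp only [Finset.mem_insert, Finset.mem_singleton]
      rintro z (rfl | rfl | rfl)
      exacts [hab.symm, hx₁.1.1, hx₂.1]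
    · rw [hdeg, Finset.card_insert_of_notMem (by simp [ha₁, ha₂]),
        Finset.card_pair hx₁₂]
  simp only [Finset.mem_insert, Finset.mem_singleton, hya, false_or] at this
  rcases this with rfl | rfl
  exacts [hx₁.1.not_isCore hwy hwc, hx₂.not_isCore hwy hwc]

lemma isModifiedLeg_of_degree_le_two (hT : T.IsTree) (hab : T.Adj a b) (hb : T.degree b ≤ 2)
    (hby : T.Adj b y) (hya : y ≠ a) (hy : IsModifiedLeg T b y) : IsModifiedLeg T a b := by
  classical
  obtain ⟨-, u, hu, hus, huniq⟩ := hy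
  refine ⟨hab, u, branch_subset_branch hT hab hby hya hu, hus, fun w hw hwc => ?_⟩
  have hwb : w ≠ b := by rintro rfl; unfold IsCore at hwc; omega
  obtain ⟨y', hby', hy'a, hwy'⟩ := exists_adj_ne_mem_branch hT hab hw hwb
  have : y' ∈ ({a, y} : Finset α) := by
    refine adj_mem_of_degree_le_card ?_ ?_ hby'
    · simp only [Finset.mem_insert, Finset.mem_singleton]
      rintro z (rfl | rfl)
      exacts [hab.symm, hby]
    · rwa [Finset.card_pair hya.symm]
  simp only [Finset.mem_insert, Finset.mem_singleton, hy'a, false_or] at this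
  exact huniq w (this ▸ hwy') hwc

theorem isGLeg_or_exists_regularCore_mem_branch (hT : T.IsTree) {a b : α} (hab : T.Adj a b)
    (hc : ∃ c ∈ Branch T b a, IsCore T c) :
    IsGLeg T a b ∨ ∃ w ∈ Branch T a b, IsRegularCore T w := by
  by_cases hreg : ∃ w ∈ Branch T a b, IsRegularCore T w
  · exact .inr hreg
  push Not at hreg
  refine .inl ?_
  by_cases hleg : ∀ w ∈ Branch T a b, T.degree w ≤ 2
  · exact .inl ⟨hab, hleg⟩
  refine .inr ?_
  by_cases hb : IsCore T b
  · refine isModifiedLeg_of_isSmallCore hT hab hc ?_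
    by_contra hbs
    exact hreg b (mem_branch_self hab) ⟨hb, hbs⟩
  push Not at hleg
  obtain ⟨c, hcb, hcc⟩ := hleg
  have hcb' : c ≠ b := by rintro rfl; exact hb hcc
  obtain ⟨y, hby, hya, hcy⟩ := exists_adj_ne_mem_branch hT hab hcb hcb'
  have hc' : ∃ c ∈ Branch T y b, IsCore T c := by
    obtain ⟨c, hc, hcc⟩ := hc
    exact ⟨c, branch_subset_branch hT hby.symm hab.symm hya.symm hc, hcc⟩
  rcases isGLeg_or_exists_regularCore_mem_branch hT hby hc' with (hy | hy) | ⟨w, hw, hwr⟩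
  · exact absurd hcc (hy.not_isCore hcy)
  · exact isModifiedLeg_of_degree_le_two hT hab (by unfold IsCore at hb; omega) hby hya hy
  · exact absurd hwr (hreg w (branch_subset_branch hT hab hby hya hw))
termination_by (Branch T a b).ncard
decreasing_by exact ncard_branch_lt_ncard_branch hT hab hby hya

lemma exists_regularCore_mem_branch_of_not_isGLeg (hT : T.IsTree) (hv : IsCore T v)
    (hvx : T.Adj v x) (hx : ¬ IsGLeg T v x) : ∃ w ∈ Branch T v x, IsRegularCore T w :=
  (isGLeg_or_exists_regularCore_mem_branch hT hvx ⟨v, mem_branch_self hvx.symm, hv⟩).resolve_left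
    hx

lemma exists_two_adj_not_of_card_add_two_le {P : α → Prop} {s : Finset α}
    (hs : ∀ x, P x → x ∈ s) (hcard : s.card + 2 ≤ T.degree v) :
    ∃ y₁ y₂, y₁ ≠ y₂ ∧ T.Adj v y₁ ∧ T.Adj v y₂ ∧ ¬ P y₁ ∧ ¬ P y₂ := by
  classical
  have h : 1 < (T.neighborFinset v \ s).card := by
    have := Finset.le_card_sdiff s (T.neighborFinset v)
    rw [card_neighborFinset_eq_degree] at this
    omega
  obtain ⟨y₁, h₁, y₂, h₂, hne⟩ := Finset.one_lt_card.1 h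
  simp only [Finset.mem_sdiff, mem_neighborFinset] at h₁ h₂
  exact ⟨y₁, y₂, hne, h₁.1, h₂.1, mt (hs y₁) h₁.2, mt (hs y₂) h₂.2⟩

lemma IsMinorCore.exists_two_adj_not_isGLeg (hv : IsMinorCore T v) :
    ∃ y₁ y₂, y₁ ≠ y₂ ∧ T.Adj v y₁ ∧ T.Adj v y₂ ∧ ¬ IsGLeg T v y₁ ∧ ¬ IsGLeg T v y₂ := by
  classical
  obtain ⟨⟨hcore, -⟩, hone | ⟨hdeg, hmod, ⟨x₁, x₂, -, -, -, hstd⟩, -⟩⟩ := hv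
  · refine exists_two_adj_not_of_card_add_two_le
      (s := Finset.univ.filter (IsGLeg T v)) (fun x hx => by simpa using hx) ?_
    have : (Finset.univ.filter (IsGLeg T v)).card ≤ 1 :=
      Finset.card_le_one.2 fun x hx y hy => hone x y (by simpa using hx) (by simpa using hy)
    unfold IsCore at hcore
    omega
  · refine exists_two_adj_not_of_card_add_two_le (s := {x₁, x₂}) ?_ ?_
    · rintro x (hx | hx)
      · simpa using hstd x hx
      · exact absurd hx (hmod x)
    · have := Finset.card_le_two (a := x₁) (b := x₂)
      omega

theorem exists_mainCore_mem_branch (hT : T.IsTree) {a b w : α} (hab : T.Adj a b)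
    (hw : w ∈ Branch T a b) (hwr : IsRegularCore T w) : ∃ m ∈ Branch T a b, IsMainCore T m := by
  by_cases hb : IsMainCore T b
  · exact ⟨b, mem_branch_self hab, hb⟩
  obtain ⟨y, hby, hya, c, hcy, hcr⟩ :
      ∃ y, T.Adj b y ∧ y ≠ a ∧ ∃ c ∈ Branch T b y, IsRegularCore T c := by
    rcases eq_or_ne w b with rfl | hwb
    · have hmin : IsMinorCore T w := not_not.1 fun h => hb ⟨hwr, h⟩
      obtain ⟨y₁, y₂, hne, h₁, h₂, hg₁, hg₂⟩ := hmin.exists_two_adj_not_isGLeg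
      obtain ⟨y, hy, hya, hg⟩ : ∃ y, T.Adj w y ∧ y ≠ a ∧ ¬ IsGLeg T w y := by
        rcases eq_or_ne y₁ a with rfl | h
        · exact ⟨y₂, h₂, hne.symm, hg₂⟩
        · exact ⟨y₁, h₁, h, hg₁⟩
      exact ⟨y, hy, hya, exists_regularCore_mem_branch_of_not_isGLeg hT hwr.1 hy hg⟩
    · obtain ⟨y, hby, hya, hwy⟩ := exists_adj_ne_mem_branch hT hab hw hwb
      exact ⟨y, hby, hya, w, hwy, hwr⟩
  obtain ⟨m, hm, hmain⟩ := exists_mainCore_mem_branch hT hby hcy hcr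
  exact ⟨m, branch_subset_branch hT hab hby hya hm, hmain⟩
termination_by (Branch T a b).ncard
decreasing_by exact ncard_branch_lt_ncard_branch hT hab hby hya

end Cores

/-- a tree with a minor core has at least two main cores. -/
theorem minor_core_implies_two_main_cores
    (T : SimpleGraph V) [DecidableRel T.Adj] (hT : T.IsTree)
    (h : ∃ v : V, IsMinorCore T v) :
    ∃ v w : V, v ≠ w ∧ IsMainCore T v ∧ IsMainCore T w := by
  obtain ⟨v, hv⟩ := h
  obtain ⟨y₁, y₂, hne, h₁, h₂, hg₁, hg₂⟩ := hv.exists_two_adj_not_isGLeg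
  obtain ⟨w₁, hw₁, hr₁⟩ := exists_regularCore_mem_branch_of_not_isGLeg hT hv.1.1 h₁ hg₁
  obtain ⟨w₂, hw₂, hr₂⟩ := exists_regularCore_mem_branch_of_not_isGLeg hT hv.1.1 h₂ hg₂
  obtain ⟨m₁, hm₁, hmain₁⟩ := exists_mainCore_mem_branch hT h₁ hw₁ hr₁
  obtain ⟨m₂, hm₂, hmain₂⟩ := exists_mainCore_mem_branch hT h₂ hw₂ hr₂
  refine ⟨m₁, m₂, ?_, hmain₁, hmain₂⟩
  rintro rfl
  exact Set.disjoint_left.1 (disjoint_branch hT.isAcyclic h₁ h₂ hne) hm₁ hm₂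
end

section
/- Let T be a tree, let L be a landmark set of T, and let v be a core of T. Then the subset of L consisting of the vertices of L that lie on the g-legs of v contains a local set for v as a subset. -/
open SimpleGraph

variable {V : Type*} [Fintype V] [DecidableEq V]

section TreeAux

set_option linter.unusedSectionVars false

variable {T : SimpleGraph V} [DecidableRel T.Adj]

lemma mem_branch_iff {v x w : V} : w ∈ Branch T v x ↔ T.dist v w = T.dist x w + 1 :=
  Iff.rfl

lemma dist_adj {a b : V} (h : T.Adj a b) : T.dist a b = 1 :=
  SimpleGraph.dist_eq_one_iff_adj.mpr h

lemma dist_getVert_le (hT : T.IsTree) {a b : V} (p : T.Walk a b) :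
    ∀ i, T.dist a (p.getVert i) ≤ i := by
  induction p with
  | nil => intro i; simp [SimpleGraph.Walk.getVert, SimpleGraph.dist_self]
  | @cons u c b h q ih =>
    intro i
    cases i with
    | zero => simp [SimpleGraph.Walk.getVert_zero]
    | succ i =>
      have h1 : (SimpleGraph.Walk.cons h q).getVert (i + 1) = q.getVert i := rfl
      rw [h1]
      calc T.dist u (q.getVert i) ≤ T.dist u c + T.dist c (q.getVert i) :=
            hT.isConnected.dist_triangle
        _ ≤ 1 + i := by
            have := ih i
            have := dist_adj h
            omega
        _ = i + 1 := by omega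

lemma dist_getVert_le' (hT : T.IsTree) {a b : V} (p : T.Walk a b) :
    ∀ i, T.dist (p.getVert i) b ≤ p.length - i := by
  induction p with
  | nil => intro i; simp [SimpleGraph.Walk.getVert, SimpleGraph.dist_self]
  | @cons u c b h q ih =>
    intro i
    cases i with
    | zero =>
      simp only [SimpleGraph.Walk.getVert_zero]
      calc T.dist u b ≤ T.dist u c + T.dist c b := hT.isConnected.dist_triangle
        _ ≤ 1 + q.length := by
            have := SimpleGraph.dist_le q
            have := dist_adj h
            omega
        _ ≤ (SimpleGraph.Walk.cons h q).length - 0 := by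
            simp [SimpleGraph.Walk.length_cons]; omega
    | succ i =>
      have h1 : (SimpleGraph.Walk.cons h q).getVert (i + 1) = q.getVert i := rfl
      rw [h1]
      have := ih i
      have h2 : (SimpleGraph.Walk.cons h q).length = q.length + 1 :=
        SimpleGraph.Walk.length_cons _ _
      omega

lemma dist_ne_across_edge (hT : T.IsTree) {v x : V} (h : T.Adj v x) (w : V) :
    T.dist v w ≠ T.dist x w := by
  intro heq
  obtain ⟨Q, hQp, hQl⟩ := hT.isConnected.exists_path_of_dist x w
  obtain ⟨P, hPp, hPl⟩ := hT.isConnected.exists_path_of_dist v w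
  have hvQ : v ∉ Q.support := by
    intro hv
    have h1 : T.dist x v ≤ (Q.takeUntil v hv).length := SimpleGraph.dist_le _
    have h2 : T.dist v w ≤ (Q.dropUntil v hv).length := SimpleGraph.dist_le _
    have h3 : (Q.takeUntil v hv).length + (Q.dropUntil v hv).length = Q.length := by
      have := congrArg SimpleGraph.Walk.length (Q.take_spec hv)
      rwa [SimpleGraph.Walk.length_append] at this
    have h4 : T.dist x v = 1 := dist_adj h.symm
    omega
  have hRp : (SimpleGraph.Walk.cons h Q).IsPath := hQp.cons hvQ
  have huniq := (hT.existsUnique_path v w).unique hPp hRp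
  have : P.length = (SimpleGraph.Walk.cons h Q).length := by rw [huniq]
  rw [SimpleGraph.Walk.length_cons] at this
  omega

lemma branch_or (hT : T.IsTree) {v x : V} (h : T.Adj v x) (w : V) :
    w ∈ Branch T v x ∨ T.dist x w = T.dist v w + 1 := by
  have h1 : T.dist v w ≤ T.dist v x + T.dist x w := hT.isConnected.dist_triangle
  have h2 : T.dist x w ≤ T.dist x v + T.dist v w := hT.isConnected.dist_triangle
  have h3 := dist_adj h
  have h4 := dist_adj h.symm
  have h5 := dist_ne_across_edge hT h w
  rw [mem_branch_iff]
  omega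

lemma not_branch_iff (hT : T.IsTree) {v x : V} (h : T.Adj v x) (w : V) :
    w ∉ Branch T v x ↔ T.dist x w = T.dist v w + 1 := by
  rw [mem_branch_iff]
  rcases branch_or hT h w with h' | h'
  · rw [mem_branch_iff] at h'
    constructor <;> intro h'' <;> omega
  · constructor <;> intro h'' <;> omega

lemma dist_add_of_branch (hT : T.IsTree) {v x w τ : V} (hvx : T.Adj v x)
    (hw : w ∈ Branch T v x) (hτ : τ ∉ Branch T v x) :
    T.dist τ w = T.dist τ v + T.dist v w := by
  classical
  have hupper : T.dist τ w ≤ T.dist τ v + T.dist v w := hT.isConnected.dist_triangle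
  obtain ⟨p, hpp, hpl⟩ := hT.isConnected.exists_path_of_dist τ w
  have hPn : p.getVert p.length ∈ Branch T v x := by
    rw [p.getVert_length]; exact hw
  have hex : ∃ k, p.getVert k ∈ Branch T v x := ⟨p.length, hPn⟩
  set k₀ := Nat.find hex with hk₀def
  have hk₀ : p.getVert k₀ ∈ Branch T v x := Nat.find_spec hex
  have hk₀le : k₀ ≤ p.length := Nat.find_min' hex hPn
  have hk₀pos : 1 ≤ k₀ := by
    rcases Nat.eq_zero_or_pos k₀ with h0 | h0
    · exfalso; rw [h0, p.getVert_zero] at hk₀; exact hτ hk₀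
    · exact h0
  set k := k₀ - 1 with hkdef
  have hkk : k + 1 = k₀ := by omega
  set z := p.getVert k with hz_def
  set z' := p.getVert k₀ with hz'_def
  have hz : z ∉ Branch T v x := Nat.find_min hex (by omega)
  have hadjzz : T.Adj z z' := by
    have := p.adj_getVert_succ (i := k) (by omega)
    rwa [hkk] at this
  have hzeq : T.dist x z = T.dist v z + 1 := (not_branch_iff hT hvx z).mp hz
  have hz'eq : T.dist v z' = T.dist x z' + 1 := hk₀
  have hzz1 : T.dist z z' = 1 := dist_adj hadjzz
  have hzz1' : T.dist z' z = 1 := dist_adj hadjzz.symm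
  have ht1 : T.dist v z' ≤ T.dist v z + T.dist z z' := hT.isConnected.dist_triangle
  have ht2 : T.dist v z ≤ T.dist v z' + T.dist z' z := hT.isConnected.dist_triangle
  have ht3 : T.dist x z' ≤ T.dist x z + T.dist z z' := hT.isConnected.dist_triangle
  have ht4 : T.dist x z ≤ T.dist x z' + T.dist z' z := hT.isConnected.dist_triangle
  have hβ : T.dist v z' = T.dist v z + 1 := by omega
  have hδ : T.dist x z' = T.dist v z := by omega
  have hzv : z = v := by
    by_contra hzv
    have hα : 1 ≤ T.dist v z := hT.isConnected.pos_dist_of_ne (fun h => hzv h.symm)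
    obtain ⟨q, hqp, hql⟩ := hT.isConnected.exists_path_of_dist v z
    have hz'q : z' ∉ q.support := by
      intro hmem
      have h1 : T.dist v z' ≤ (q.takeUntil z' hmem).length := SimpleGraph.dist_le _
      have h2 := q.length_takeUntil_le hmem
      omega
    have hW₁path : (q.concat hadjzz).IsPath := by
      rw [← SimpleGraph.Walk.isPath_reverse_iff, SimpleGraph.Walk.reverse_concat]
      refine hqp.reverse.cons ?_
      rw [SimpleGraph.Walk.support_reverse]
      simpa using hz'q
    obtain ⟨Q', hQ'p, hQ'l⟩ := hT.isConnected.exists_path_of_dist x z'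
    have hvQ' : v ∉ Q'.support := by
      intro hmem
      have h1 : T.dist x v ≤ (Q'.takeUntil v hmem).length := SimpleGraph.dist_le _
      have h2 : T.dist v z' ≤ (Q'.dropUntil v hmem).length := SimpleGraph.dist_le _
      have h3 : (Q'.takeUntil v hmem).length + (Q'.dropUntil v hmem).length = Q'.length := by
        have := congrArg SimpleGraph.Walk.length (Q'.take_spec hmem)
        rwa [SimpleGraph.Walk.length_append] at this
      have h4 : T.dist x v = 1 := dist_adj hvx.symm
      omega
    have hW₂path : (SimpleGraph.Walk.cons hvx Q').IsPath := hQ'p.cons hvQ'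
    have hweq : q.concat hadjzz = SimpleGraph.Walk.cons hvx Q' :=
      (hT.existsUnique_path v z').unique hW₁path hW₂path
    have hzsup : z ∈ (q.concat hadjzz).support := by
      rw [SimpleGraph.Walk.support_concat]
      simp only [List.concat_eq_append, List.mem_append]
      exact Or.inl q.end_mem_support
    rw [hweq, SimpleGraph.Walk.support_cons] at hzsup
    rcases List.mem_cons.mp hzsup with h1 | h1
    · exact hzv h1
    · have h2 : T.dist x z ≤ (Q'.takeUntil z h1).length := SimpleGraph.dist_le _
      have h3 := Q'.length_takeUntil_le h1
      omega
  have e0 : T.dist v z = 0 := by rw [hzv, SimpleGraph.dist_self]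
  have e1 : T.dist τ v ≤ k := by
    have := dist_getVert_le hT p k
    rwa [← hz_def, hzv] at this
  have e3 : T.dist z' w ≤ p.length - k₀ := dist_getVert_le' hT p k₀
  have e4 : T.dist v w ≤ T.dist v z' + T.dist z' w := hT.isConnected.dist_triangle
  omega

lemma exists_penultimate (hT : T.IsTree) {a b : V} (h : 1 ≤ T.dist a b) :
    ∃ c, T.Adj c b ∧ T.dist a c + 1 = T.dist a b := by
  obtain ⟨p, hpp, hpl⟩ := hT.isConnected.exists_path_of_dist a b
  have hlen : 1 ≤ p.length := by omega
  have hadj : T.Adj (p.getVert (p.length - 1)) b := by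
    have := p.adj_getVert_succ (i := p.length - 1) (by omega)
    rwa [show p.length - 1 + 1 = p.length by omega, p.getVert_length] at this
  refine ⟨p.getVert (p.length - 1), hadj, ?_⟩
  have h1 := dist_getVert_le hT p (p.length - 1)
  have h2 : T.dist a b ≤ T.dist a (p.getVert (p.length - 1)) +
      T.dist (p.getVert (p.length - 1)) b := hT.isConnected.dist_triangle
  have h3 : T.dist (p.getVert (p.length - 1)) b = 1 := dist_adj hadj
  omega

lemma adj_mem_branch {v x : V} (h : T.Adj v x) : x ∈ Branch T v x := by
  rw [mem_branch_iff, dist_adj h, SimpleGraph.dist_self]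

lemma branch_dist_pos {v x w : V} (hw : w ∈ Branch T v x) : 1 ≤ T.dist v w := by
  rw [mem_branch_iff] at hw; omega

lemma branch_lvl1 (hT : T.IsTree) {v x w : V} (hw : w ∈ Branch T v x)
    (h1 : T.dist v w = 1) : w = x := by
  rw [mem_branch_iff] at hw
  have : T.dist x w = 0 := by omega
  exact (hT.isConnected.dist_eq_zero_iff.mp this).symm

lemma branch_parent (hT : T.IsTree) {v x w : V} (hvx : T.Adj v x)
    (hw : w ∈ Branch T v x) (h2 : 2 ≤ T.dist v w) :
    ∃ w', w' ∈ Branch T v x ∧ T.Adj w' w ∧ T.dist v w' + 1 = T.dist v w := by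
  have hxw : 1 ≤ T.dist x w := by rw [mem_branch_iff] at hw; omega
  obtain ⟨c, hadj, hd⟩ := exists_penultimate hT hxw
  have h1 : T.dist v c ≤ T.dist v x + T.dist x c := hT.isConnected.dist_triangle
  have h2' : T.dist v w ≤ T.dist v c + T.dist c w := hT.isConnected.dist_triangle
  have h3 : T.dist c w = 1 := dist_adj hadj
  have h4 : T.dist v x = 1 := dist_adj hvx
  rw [mem_branch_iff] at hw
  have h5 : T.dist v c = T.dist x c + 1 := by omega
  exact ⟨c, h5, hadj, by omega⟩

lemma branch_exists_lvl2 (hT : T.IsTree) {v x w : V} (hvx : T.Adj v x)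
    (hw : w ∈ Branch T v x) (h2 : 2 ≤ T.dist v w) :
    ∃ z ∈ Branch T v x, T.dist v z = 2 := by
  obtain ⟨n, hn⟩ : ∃ n, T.dist v w = n + 2 := ⟨T.dist v w - 2, by omega⟩
  clear h2
  induction n generalizing w with
  | zero => exact ⟨w, hw, hn⟩
  | succ n ih =>
    obtain ⟨w', hw', hadj, hd⟩ := branch_parent hT hvx hw (by omega)
    exact ih hw' (by omega)

lemma branch_level_unique (hT : T.IsTree) {v x : V} (hvx : T.Adj v x) :
    ∀ d z₁ z₂, z₁ ∈ Branch T v x → z₂ ∈ Branch T v x → T.dist v z₁ = d →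
      T.dist v z₂ = d → z₁ ≠ z₂ →
      ∃ c ∈ Branch T v x, 3 ≤ T.degree c ∧ T.dist v c < d := by
  intro d
  induction d with
  | zero =>
    intro z₁ z₂ h1 h2 hd1 hd2 hne
    have := branch_dist_pos h1; omega
  | succ d ih =>
    intro z₁ z₂ h1 h2 hd1 hd2 hne
    by_cases hd0 : d = 0
    · exfalso
      subst hd0
      have e1 := branch_lvl1 hT h1 hd1
      have e2 := branch_lvl1 hT h2 hd2
      exact hne (e1.trans e2.symm)
    · obtain ⟨w₁, hw₁, hadj₁, hdd₁⟩ := branch_parent hT hvx h1 (by omega)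
      obtain ⟨w₂, hw₂, hadj₂, hdd₂⟩ := branch_parent hT hvx h2 (by omega)
      by_cases hww : w₁ = w₂
      · subst hww
        have hp : ∃ p, T.Adj w₁ p ∧ T.dist v p < d := by
          by_cases hd1' : d = 1
          · refine ⟨v, ?_, by rw [SimpleGraph.dist_self]; omega⟩
            have : w₁ = x := branch_lvl1 hT hw₁ (by omega)
            rw [this]; exact hvx.symm
          · obtain ⟨p, hp, hpadj, hpd⟩ := branch_parent hT hvx hw₁ (by omega)
            exact ⟨p, hpadj.symm, by omega⟩
        obtain ⟨p, hpadj, hpd⟩ := hp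
        have hz1p : z₁ ≠ p := fun h => by rw [h] at hd1; omega
        have hz2p : z₂ ≠ p := fun h => by rw [h] at hd2; omega
        have hsub : ({z₁, z₂, p} : Finset V) ⊆ T.neighborFinset w₁ := by
          intro t ht
          simp only [Finset.mem_insert, Finset.mem_singleton] at ht
          rw [SimpleGraph.mem_neighborFinset]
          rcases ht with rfl | rfl | rfl
          · exact hadj₁
          · exact hadj₂
          · exact hpadj
        have hcard : ({z₁, z₂, p} : Finset V).card = 3 :=
          Finset.card_eq_three.mpr ⟨z₁, z₂, p, hne, hz1p, hz2p, rfl⟩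
        have hdeg : 3 ≤ T.degree w₁ := by
          rw [← SimpleGraph.card_neighborFinset_eq_degree, ← hcard]
          exact Finset.card_le_card hsub
        exact ⟨w₁, hw₁, hdeg, by omega⟩
      · obtain ⟨c, hc, hcdeg, hcd⟩ := ih w₁ w₂ hw₁ hw₂ (by omega) (by omega) hww
        exact ⟨c, hc, hcdeg, by omega⟩

lemma separator_mem_branch (hT : T.IsTree) {v x y u₁ u₂ τ : V} (hvx : T.Adj v x)
    (hvy : T.Adj v y) (h1 : u₁ ∈ Branch T v x) (h2 : u₂ ∈ Branch T v y)
    (hd : T.dist v u₁ = T.dist v u₂) (hsep : T.dist τ u₁ ≠ T.dist τ u₂) :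
    τ ∈ Branch T v x ∨ τ ∈ Branch T v y := by
  by_contra h
  push_neg at h
  rw [dist_add_of_branch hT hvx h1 h.1, dist_add_of_branch hT hvy h2 h.2, hd] at hsep
  exact hsep rfl

lemma branch_disjoint (hT : T.IsTree) {v x y : V} (hvx : T.Adj v x) (hvy : T.Adj v y)
    (hxy : x ≠ y) {w : V} (h1 : w ∈ Branch T v x) (h2 : w ∈ Branch T v y) : False := by
  have hy : y ∉ Branch T v x := by
    intro h
    rw [mem_branch_iff, dist_adj hvy] at h
    have : T.dist x y = 0 := by omega
    exact hxy (hT.isConnected.dist_eq_zero_iff.mp this)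
  have h3 := dist_add_of_branch hT hvx h1 hy
  rw [mem_branch_iff] at h2
  have hyv : T.dist y v = 1 := dist_adj hvy.symm
  omega

end TreeAux


section MainAux

set_option linter.unusedSectionVars false

variable {T : SimpleGraph V} [DecidableRel T.Adj]

lemma no_two_separators {L : Set V} (hL : IsLandmarkSet T L) {u₁ u₂ : V}
    (h12 : u₁ ≠ u₂) (h1 : u₁ ∉ L) (h2 : u₂ ∉ L) (P : V → Prop)
    (hsep : ∀ τ ∈ L, Separates T τ u₁ u₂ → P τ)
    (hsub : ∀ s t, s ∈ L → P s → t ∈ L → P t → s = t) : False := by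
  obtain ⟨τ₁, hτ₁, τ₂, hτ₂, hne, hs₁, hs₂⟩ := hL u₁ u₂ h12 h1 h2
  exact hne (hsub τ₁ τ₂ hτ₁ (hsep τ₁ hτ₁ hs₁) hτ₂ (hsep τ₂ hτ₂ hs₂))

lemma modified_leg_structure (hT : T.IsTree) {v x : V} (hv : IsCore T v)
    (hm : IsModifiedLeg T v x) :
    ∃ u a b, MLegPair T v x u a b ∧ T.Adj u a ∧ T.Adj u b ∧
      Branch T u b = {b} ∧ Branch T u a ⊆ Branch T v x ∧
      (∀ w ∈ Branch T u a, T.dist v w = T.dist v u + T.dist u w) ∧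
      (∀ w ∈ Branch T v x, T.dist v w = T.dist v u + 1 → w = a ∨ w = b) := by
  obtain ⟨hadj, u, huBr, hsc, huniq⟩ := hm
  obtain ⟨hdeg, b, a, hba, hbshort, hastd⟩ := hsc
  have hadjub : T.Adj u b := hbshort.1.1
  have hadjua : T.Adj u a := hastd.1
  have hvu1 : 1 ≤ T.dist v u := branch_dist_pos huBr
  have hxu : T.dist v u = T.dist x u + 1 := huBr
  have hv3 : 3 ≤ T.degree v := hv
  have hvna : v ∉ Branch T u a := fun h => by
    have := hastd.2 v h
    omega
  have hvnb : v ∉ Branch T u b := by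
    rw [hbshort.2]
    intro h
    rw [Set.mem_singleton_iff] at h
    have := hbshort.1.2 b (adj_mem_branch hadjub)
    rw [← h] at this
    omega
  have hda : T.dist v a = T.dist v u + 1 := by
    have h1 := (not_branch_iff hT hadjua v).mp hvna
    have c1 : T.dist a v = T.dist v a := SimpleGraph.dist_comm
    have c2 : T.dist u v = T.dist v u := SimpleGraph.dist_comm
    omega
  have hdb : T.dist v b = T.dist v u + 1 := by
    have h1 := (not_branch_iff hT hadjub v).mp hvnb
    have c1 : T.dist b v = T.dist v b := SimpleGraph.dist_comm
    have c2 : T.dist u v = T.dist v u := SimpleGraph.dist_comm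
    omega
  have hnesta : ∀ w ∈ Branch T u a, T.dist v w = T.dist v u + T.dist u w :=
    fun w hw => dist_add_of_branch hT hadjua hw hvna
  have haBa : a ∈ Branch T u a := adj_mem_branch hadjua
  have hxna : x ∉ Branch T u a := by
    intro h
    have h1 := hnesta x h
    have h2 : T.dist v x = 1 := dist_adj hadj
    have h3 : 1 ≤ T.dist u x := branch_dist_pos h
    omega
  have hsuba : Branch T u a ⊆ Branch T v x := by
    intro w hw
    have h1 := dist_add_of_branch hT hadjua hw hxna
    have h2 := hnesta w hw
    rw [mem_branch_iff]
    omega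
  have hbBb : b ∈ Branch T u b := adj_mem_branch hadjub
  have hxnb : x ∉ Branch T u b := by
    rw [hbshort.2]
    intro h
    rw [Set.mem_singleton_iff] at h
    have h2 : T.dist v x = 1 := dist_adj hadj
    rw [h] at h2
    omega
  have hbBx : b ∈ Branch T v x := by
    have h1 := dist_add_of_branch hT hadjub hbBb hxnb
    have h2 : T.dist u b = 1 := dist_adj hadjub
    rw [mem_branch_iff]
    omega
  have haBx : a ∈ Branch T v x := hsuba haBa
  have hpair : MLegPair T v x u a b :=
    ⟨huBr, ⟨hdeg, b, a, hba, hbshort, hastd⟩, hba.symm, haBx, hbBx, hda, hdb, hbshort⟩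
  refine ⟨u, a, b, hpair, hadjua, hadjub, hbshort.2, hsuba, hnesta, ?_⟩
  obtain ⟨p, hup, hpd⟩ : ∃ p, T.Adj u p ∧ T.dist v p + 1 = T.dist v u := by
    by_cases h1 : T.dist v u = 1
    · have hux : u = x := branch_lvl1 hT huBr h1
      refine ⟨v, by rw [hux]; exact hadj.symm, by rw [SimpleGraph.dist_self]; omega⟩
    · obtain ⟨p, hp, hpadj, hpd⟩ := branch_parent hT hadj huBr (by omega)
      exact ⟨p, hpadj.symm, hpd⟩
  have hnbr : ∀ z, T.Adj u z → z = a ∨ z = b ∨ z = p := by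
    have hap : a ≠ p := fun h => by rw [h] at hda; omega
    have hbp : b ≠ p := fun h => by rw [h] at hdb; omega
    have hsub : ({a, b, p} : Finset V) ⊆ T.neighborFinset u := by
      intro t ht
      simp only [Finset.mem_insert, Finset.mem_singleton] at ht
      rw [SimpleGraph.mem_neighborFinset]
      rcases ht with rfl | rfl | rfl
      · exact hadjua
      · exact hadjub
      · exact hup
    have hcard : ({a, b, p} : Finset V).card = 3 :=
      Finset.card_eq_three.mpr ⟨a, b, p, hba.symm, hap, hbp, rfl⟩
    have heq : ({a, b, p} : Finset V) = T.neighborFinset u :=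
      Finset.eq_of_subset_of_card_le hsub (by
        rw [SimpleGraph.card_neighborFinset_eq_degree, hdeg, hcard])
    intro z hz
    have : z ∈ ({a, b, p} : Finset V) := by
      rw [heq, SimpleGraph.mem_neighborFinset]; exact hz
    simpa using this
  intro w hwBx hwdist
  obtain ⟨w', hw'B, hw'adj, hw'd⟩ := branch_parent hT hadj hwBx (by omega)
  by_cases hwu : w' = u
  · rw [hwu] at hw'adj
    rcases hnbr w hw'adj with h | h | h
    · exact Or.inl h
    · exact Or.inr h
    · exfalso; rw [h] at hwdist; omega
  · exfalso
    obtain ⟨c, hcB, hcdeg, hcd⟩ := branch_level_unique hT hadj (T.dist v u)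
      w' u hw'B huBr (by omega) rfl hwu
    have hcu : c = u := huniq c hcB hcdeg
    rw [hcu] at hcd
    omega

end MainAux


/-- for a landmark set `L` and a core `v`, the subset of `L` lying on
the g-legs of `v` contains a local set for `v` as a subset. -/
theorem landmark_set_contains_local_set
    (T : SimpleGraph V) [DecidableRel T.Adj] (hT : T.IsTree)
    (L : Set V) (hL : IsLandmarkSet T L)
    (v : V) (hv : IsCore T v) :
    ∃ S : Set V, S ⊆ L ∩ GLegVerts T v ∧ IsLocalSet T v S := by
  classical
  have hconn := hT.isConnected
  set S := L ∩ GLegVerts T v with hSdef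
  have hBsubG : ∀ {x : V}, IsGLeg T v x → Branch T v x ⊆ GLegVerts T v :=
    fun {x} hx w hw => ⟨x, hx, hw⟩
  have hSsub : ∀ {x : V}, IsGLeg T v x → S ∩ Branch T v x = L ∩ Branch T v x := by
    intro x hx
    ext w
    constructor
    · rintro ⟨⟨hwL, _⟩, hwB⟩; exact ⟨hwL, hwB⟩
    · rintro ⟨hwL, hwB⟩; exact ⟨⟨hwL, hBsubG hx hwB⟩, hwB⟩
  refine ⟨S, subset_rfl, Set.inter_subset_right, ?_, ?_, ?_, ?_, ?_, ?_⟩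
  · -- (1) at most one standard leg with a type (s,0) solution
    intro x y hx hy hxy h0x h0y
    have hLx : L ∩ Branch T v x = ∅ := by rw [← hSsub (Or.inl hx)]; exact h0x
    have hLy : L ∩ Branch T v y = ∅ := by rw [← hSsub (Or.inl hy)]; exact h0y
    have hxnL : x ∉ L := fun h =>
      Set.eq_empty_iff_forall_notMem.mp hLx x ⟨h, adj_mem_branch hx.1⟩
    have hynL : y ∉ L := fun h =>
      Set.eq_empty_iff_forall_notMem.mp hLy y ⟨h, adj_mem_branch hy.1⟩
    refine no_two_separators hL hxy hxnL hynL (fun _ => False) ?_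
      (fun s t _ hs _ _ => hs.elim)
    intro τ hτL hsepτ
    rcases separator_mem_branch hT hx.1 hy.1 (adj_mem_branch hx.1) (adj_mem_branch hy.1)
        (by rw [dist_adj hx.1, dist_adj hy.1]) hsepτ with h | h
    · exact Set.eq_empty_iff_forall_notMem.mp hLx τ ⟨hτL, h⟩
    · exact Set.eq_empty_iff_forall_notMem.mp hLy τ ⟨hτL, h⟩
  · -- every standard leg has a solution of one of the four types
    intro x hx
    by_cases hE : S ∩ Branch T v x = ∅
    · exact Or.inl hE
    · obtain ⟨w, hw⟩ := Set.nonempty_iff_ne_empty.mpr hE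
      by_cases h2 : ∃ w₂ ∈ S ∩ Branch T v x, w₂ ≠ w
      · obtain ⟨w₂, hw₂, hww⟩ := h2
        exact Or.inr (Or.inr (Or.inl ⟨w₂, hw₂, w, hw, hww⟩))
      · push_neg at h2
        have hsingle : S ∩ Branch T v x = {w} :=
          Set.eq_singleton_iff_unique_mem.mpr ⟨hw, h2⟩
        by_cases hwx : w = x
        · exact Or.inr (Or.inr (Or.inr (by show S ∩ Branch T v x = {x}; rw [hsingle, hwx])))
        · refine Or.inr (Or.inl ⟨w, hsingle, ?_⟩)
          have hwB : w ∈ Branch T v x := hw.2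
          have h3 : 0 < T.dist x w := hconn.pos_dist_of_ne (fun h => hwx h.symm)
          rw [mem_branch_iff] at hwB
          omega
  · -- (2) every modified leg has a solution of type (m,1), (m,2) or (m,3)
    intro x hm
    have hgx : IsGLeg T v x := Or.inr hm
    obtain ⟨u, a, b, hpair, hadjua, hadjub, hBub, hsuba, hnesta, hlevel⟩ :=
      modified_leg_structure hT hv hm
    have hvu1 : 1 ≤ T.dist v u := branch_dist_pos hpair.1
    have haBx : a ∈ Branch T v x := hpair.2.2.2.1
    have hbBx : b ∈ Branch T v x := hpair.2.2.2.2.1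
    have hab : a ≠ b := hpair.2.2.1
    by_cases haL : a ∈ L
    · have haS : a ∈ S ∩ Branch T v x := ⟨⟨haL, hBsubG hgx haBx⟩, haBx⟩
      by_cases h2 : ∃ w ∈ S ∩ Branch T v x, w ≠ a
      · obtain ⟨w, hwS, hwa⟩ := h2
        exact Or.inr (Or.inr ⟨u, a, b, hpair, ⟨a, haS, w, hwS, fun h => hwa h.symm⟩,
          Or.inl haS.1⟩)
      · push_neg at h2
        exact Or.inl ⟨u, a, b, hpair,
          Or.inl (Set.eq_singleton_iff_unique_mem.mpr ⟨haS, h2⟩)⟩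
    · by_cases hbL : b ∈ L
      · have hbS : b ∈ S ∩ Branch T v x := ⟨⟨hbL, hBsubG hgx hbBx⟩, hbBx⟩
        by_cases h2 : ∃ w ∈ S ∩ Branch T v x, w ≠ b
        · obtain ⟨w, hwS, hwb⟩ := h2
          exact Or.inr (Or.inr ⟨u, a, b, hpair, ⟨b, hbS, w, hwS, fun h => hwb h.symm⟩,
            Or.inr hbS.1⟩)
        · push_neg at h2
          exact Or.inl ⟨u, a, b, hpair,
            Or.inr (Set.eq_singleton_iff_unique_mem.mpr ⟨hbS, h2⟩)⟩
      · -- type (m,2)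
        have hmem : ∀ τ ∈ L, Separates T τ a b → τ ∈ Branch T u a ∧ τ ≠ a := by
          intro τ hτL hsep
          rcases separator_mem_branch hT hadjua hadjub (adj_mem_branch hadjua)
              (adj_mem_branch hadjub)
              (by rw [dist_adj hadjua, dist_adj hadjub]) hsep with h | h
          · exact ⟨h, fun he => haL (he ▸ hτL)⟩
          · rw [hBub, Set.mem_singleton_iff] at h
            exact absurd (h ▸ hτL) hbL
        obtain ⟨τ₁, hτ₁L, τ₂, hτ₂L, hττ, hs₁, hs₂⟩ := hL a b hab haL hbL
        obtain ⟨hτ₁B, hτ₁a⟩ := hmem τ₁ hτ₁L hs₁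
        obtain ⟨hτ₂B, hτ₂a⟩ := hmem τ₂ hτ₂L hs₂
        have hposa : ∀ τ, τ ∈ Branch T u a → τ ≠ a → T.dist v u + 2 ≤ T.dist v τ := by
          intro τ hτ hτa
          have h1 := hnesta τ hτ
          rw [mem_branch_iff] at hτ
          have h2 : 0 < T.dist a τ := hconn.pos_dist_of_ne (fun h => hτa h.symm)
          omega
        have hmemS : ∀ τ, τ ∈ L → τ ∈ Branch T u a → τ ∈ S ∩ Branch T v x :=
          fun τ hτL hτB => ⟨⟨hτL, hBsubG hgx (hsuba hτB)⟩, hsuba hτB⟩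
        refine Or.inr (Or.inl ⟨u, a, b, hpair, fun h => haL h.1, fun h => hbL h.1,
          ⟨τ₁, hmemS τ₁ hτ₁L hτ₁B, τ₂, hmemS τ₂ hτ₂L hτ₂B, hττ,
            hposa τ₁ hτ₁B hτ₁a, hposa τ₂ hτ₂B hτ₂a⟩, ?_⟩)
        intro w hw heq
        rcases hlevel w hw.2 heq with rfl | rfl
        · exact haL hw.1.1
        · exact hbL hw.1.1
  · -- (3) if some standard leg has type (s,0), no modified leg has type (m,1)
    rintro ⟨x, hx, h0x⟩ y hmy hM1
    obtain ⟨u', a', b', hpair', hor⟩ := hM1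
    have hady : T.Adj v y := hmy.1
    have hadx : T.Adj v x := hx.1
    have hvu' : 1 ≤ T.dist v u' := branch_dist_pos hpair'.1
    have hxy : x ≠ y := by
      intro h
      have h1 := hx.2 u' (h ▸ hpair'.1)
      have h2 : T.degree u' = 3 := hpair'.2.1.1
      omega
    have hLx : L ∩ Branch T v x = ∅ := by rw [← hSsub (Or.inl hx)]; exact h0x
    have hxnL : x ∉ L := fun h =>
      Set.eq_empty_iff_forall_notMem.mp hLx x ⟨h, adj_mem_branch hadx⟩
    have hdc : ∀ c, S ∩ Branch T v y = {c} → T.dist v c = T.dist v u' + 1 → False := by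
      intro c hc hdcc
      have hynL : y ∉ L := by
        intro h
        have hyS : y ∈ S ∩ Branch T v y :=
          ⟨⟨h, hBsubG (Or.inr hmy) (adj_mem_branch hady)⟩, adj_mem_branch hady⟩
        rw [hc, Set.mem_singleton_iff] at hyS
        have hy1 : T.dist v y = 1 := dist_adj hady
        rw [hyS] at hy1
        omega
      refine no_two_separators hL hxy hxnL hynL (fun τ => τ = c) ?_
        (fun s t _ hs _ ht => hs.trans ht.symm)
      intro τ hτL hsepτ
      rcases separator_mem_branch hT hadx hady (adj_mem_branch hadx) (adj_mem_branch hady)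
          (by rw [dist_adj hadx, dist_adj hady]) hsepτ with h | h
      · exact ((Set.eq_empty_iff_forall_notMem.mp hLx τ) ⟨hτL, h⟩).elim
      · have hτS : τ ∈ S ∩ Branch T v y := ⟨⟨hτL, hBsubG (Or.inr hmy) h⟩, h⟩
        rw [hc, Set.mem_singleton_iff] at hτS
        exact hτS
    rcases hor with hc | hc
    · exact hdc a' hc hpair'.2.2.2.2.2.1
    · exact hdc b' hc hpair'.2.2.2.2.2.2.1
  · -- (4) if some long leg has type (s,0), every other long leg has type (s,2)
    intro x hxlong h0x y hylong hyx
    by_contra hnS2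
    have hx := hxlong.1
    have hy := hylong.1
    have hss : ∀ w₁ ∈ S ∩ Branch T v y, ∀ w₂ ∈ S ∩ Branch T v y, w₁ = w₂ := by
      intro w₁ h1 w₂ h2
      by_contra hne
      exact hnS2 ⟨w₁, h1, w₂, h2, hne⟩
    have hLx : L ∩ Branch T v x = ∅ := by rw [← hSsub (Or.inl hx)]; exact h0x
    have hxnL : x ∉ L := fun h =>
      Set.eq_empty_iff_forall_notMem.mp hLx x ⟨h, adj_mem_branch hx.1⟩
    have hxyne : x ≠ y := fun h => hyx h.symm
    by_cases hyL : y ∈ L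
    · have hex : ∀ z : V, IsLongLeg T v z → ∃ z₂ ∈ Branch T v z, T.dist v z₂ = 2 := by
        intro z hz
        have hzz : ∃ w ∈ Branch T v z, w ≠ z := by
          by_contra h
          push_neg at h
          exact hz.2 (Set.eq_singleton_iff_unique_mem.mpr ⟨adj_mem_branch hz.1.1, h⟩)
        obtain ⟨w, hwB, hwz⟩ := hzz
        have h2 : 2 ≤ T.dist v w := by
          have := hconn.pos_dist_of_ne (fun h => hwz h.symm)
          rw [mem_branch_iff] at hwB
          omega
        exact branch_exists_lvl2 hT hz.1.1 hwB h2
      obtain ⟨x₂, hx₂B, hx₂d⟩ := hex x hxlong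
      obtain ⟨y₂, hy₂B, hy₂d⟩ := hex y hylong
      have hyS : y ∈ S ∩ Branch T v y :=
        ⟨⟨hyL, hBsubG (Or.inl hy) (adj_mem_branch hy.1)⟩, adj_mem_branch hy.1⟩
      have hx₂L : x₂ ∉ L := fun h =>
        Set.eq_empty_iff_forall_notMem.mp hLx x₂ ⟨h, hx₂B⟩
      have hy₂L : y₂ ∉ L := by
        intro h
        have h1 := hss y₂ ⟨⟨h, hBsubG (Or.inl hy) hy₂B⟩, hy₂B⟩ y hyS
        have h2 : T.dist v y = 1 := dist_adj hy.1
        rw [h1] at hy₂d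
        omega
      have hx₂y₂ : x₂ ≠ y₂ := fun h =>
        branch_disjoint hT hx.1 hy.1 hxyne (h ▸ hx₂B) hy₂B
      refine no_two_separators hL hx₂y₂ hx₂L hy₂L (fun τ => τ = y) ?_
        (fun s t _ hs _ ht => hs.trans ht.symm)
      intro τ hτL hsepτ
      rcases separator_mem_branch hT hx.1 hy.1 hx₂B hy₂B
          (by rw [hx₂d, hy₂d]) hsepτ with h | h
      · exact ((Set.eq_empty_iff_forall_notMem.mp hLx τ) ⟨hτL, h⟩).elim
      · exact hss τ ⟨⟨hτL, hBsubG (Or.inl hy) h⟩, h⟩ y hyS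
    · refine no_two_separators hL hxyne hxnL hyL (fun τ => τ ∈ S ∩ Branch T v y) ?_
        (fun s t _ hs _ ht => hss s hs t ht)
      intro τ hτL hsepτ
      rcases separator_mem_branch hT hx.1 hy.1 (adj_mem_branch hx.1) (adj_mem_branch hy.1)
          (by rw [dist_adj hx.1, dist_adj hy.1]) hsepτ with h | h
      · exact ((Set.eq_empty_iff_forall_notMem.mp hLx τ) ⟨hτL, h⟩).elim
      · exact ⟨⟨hτL, hBsubG (Or.inl hy) h⟩, h⟩
  · -- (5) if some short leg has type (s,0), all long legs have type (s,2) or (s,3)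
    rintro ⟨x, hxshort, h0x⟩ y hylong
    by_contra hn
    push_neg at hn
    obtain ⟨hn2, hn3⟩ := hn
    have hx := hxshort.1
    have hy := hylong.1
    have hss : ∀ w₁ ∈ S ∩ Branch T v y, ∀ w₂ ∈ S ∩ Branch T v y, w₁ = w₂ := by
      intro w₁ h1 w₂ h2
      by_contra hne
      exact hn2 ⟨w₁, h1, w₂, h2, hne⟩
    have hLx : L ∩ Branch T v x = ∅ := by rw [← hSsub (Or.inl hx)]; exact h0x
    have hxnL : x ∉ L := fun h =>
      Set.eq_empty_iff_forall_notMem.mp hLx x ⟨h, adj_mem_branch hx.1⟩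
    by_cases hyL : y ∈ L
    · apply hn3
      have hyS : y ∈ S ∩ Branch T v y :=
        ⟨⟨hyL, hBsubG (Or.inl hy) (adj_mem_branch hy.1)⟩, adj_mem_branch hy.1⟩
      exact Set.eq_singleton_iff_unique_mem.mpr ⟨hyS, fun t ht => hss t ht y hyS⟩
    · have hxyne : x ≠ y := by
        intro h
        exact hylong.2 (h ▸ hxshort.2)
      refine no_two_separators hL hxyne hxnL hyL (fun τ => τ ∈ S ∩ Branch T v y) ?_
        (fun s t _ hs _ ht => hss s hs t ht)
      intro τ hτL hsepτ
      rcases separator_mem_branch hT hx.1 hy.1 (adj_mem_branch hx.1) (adj_mem_branch hy.1)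
          (by rw [dist_adj hx.1, dist_adj hy.1]) hsepτ with h | h
      · exact ((Set.eq_empty_iff_forall_notMem.mp hLx τ) ⟨hτL, h⟩).elim
      · exact ⟨⟨hτL, hBsubG (Or.inl hy) h⟩, h⟩
end

section
/- Let T be a tree and v a main core of T. Then every local set for v has at least two vertices. -/
open SimpleGraph

variable {V : Type*} [Fintype V] [DecidableEq V]

section TreeLemmas

variable {T : SimpleGraph V}

lemma path_length_eq_dist (hT : T.IsTree) {a b : V} {p : T.Walk a b} (hp : p.IsPath) :
    p.length = T.dist a b := by
  obtain ⟨q, hq⟩ := hT.isConnected.exists_walk_length_eq_dist a b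
  have h1 : T.dist a b ≤ p.length := SimpleGraph.dist_le p
  have h2 := hT.IsAcyclic.path_unique ⟨p, hp⟩ q.toPath
  have h3 : (q.toPath : T.Walk a b).length ≤ q.length := Walk.length_bypass_le _
  have h4 : p.length = (q.toPath : T.Walk a b).length :=
    congrArg (fun r : T.Path a b => (r : T.Walk a b).length) h2
  omega

lemma dist_add_of_mem_support (hT : T.IsTree) {a b u : V} {p : T.Walk a b}
    (hp : p.IsPath) (hu : u ∈ p.support) :
    T.dist a b = T.dist a u + T.dist u b := by
  have h1 : (p.takeUntil u hu).length = T.dist a u :=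
    path_length_eq_dist hT (hp.takeUntil hu)
  have h2 : (p.dropUntil u hu).length = T.dist u b :=
    path_length_eq_dist hT (hp.dropUntil hu)
  have h3 : p.length = T.dist a b := path_length_eq_dist hT hp
  have h4 := congrArg Walk.length (p.take_spec hu)
  rw [Walk.length_append] at h4
  omega

lemma exists_path (hc : T.Connected) (a b : V) : ∃ p : T.Walk a b, p.IsPath :=
  (hc.preconnected a b).elim fun w => ⟨w.toPath, w.toPath.2⟩

/-- membership in a branch iff there is a path from u through n to w. -/
lemma branch_iff (hT : T.IsTree) {u n w : V} (h : T.Adj u n) (hw : w ≠ u) :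
    w ∈ Branch T u n ↔ ∃ p : T.Walk n w, (Walk.cons h p).IsPath := by
  constructor
  · intro hmem
    obtain ⟨p, hp⟩ := exists_path hT.isConnected n w
    have hun : u ∉ p.support := by
      intro hus
      have hsp := dist_add_of_mem_support hT hp hus
      have h2 : T.dist u w = T.dist n w + 1 := hmem
      have h3 : T.dist n u ≠ 0 := fun h0 =>
        h.ne' ((hT.isConnected.dist_eq_zero_iff).1 h0)
      omega
    exact ⟨p, hp.cons hun⟩
  · rintro ⟨p, hp⟩
    have h1 : (Walk.cons h p).length = T.dist u w := path_length_eq_dist hT hp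
    have h2 : p.length = T.dist n w :=
      path_length_eq_dist hT ((Walk.cons_isPath_iff h p).1 hp).1
    have h1' : p.length + 1 = T.dist u w := by rw [← h1, Walk.length_cons]
    show T.dist u w = T.dist n w + 1
    omega

lemma second_vertex_unique (hT : T.IsTree) {u w n₁ n₂ : V} (h₁ : T.Adj u n₁) (h₂ : T.Adj u n₂)
    {p₁ : T.Walk n₁ w} {p₂ : T.Walk n₂ w}
    (hp₁ : (Walk.cons h₁ p₁).IsPath) (hp₂ : (Walk.cons h₂ p₂).IsPath) : n₁ = n₂ := by
  have h2 := hT.IsAcyclic.path_unique ⟨Walk.cons h₁ p₁, hp₁⟩ ⟨Walk.cons h₂ p₂, hp₂⟩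
  have h3 : (Walk.cons h₁ p₁).support = (Walk.cons h₂ p₂).support := by
    exact congrArg (fun r : T.Path u w => (r : T.Walk u w).support) h2
  rw [Walk.support_cons, Walk.support_cons, p₁.support_eq_cons, p₂.support_eq_cons] at h3
  simp only [List.cons.injEq] at h3
  exact h3.2.1

lemma notMem_branch_self (T : SimpleGraph V) (u n : V) : u ∉ Branch T u n := by
  intro h
  have h1 : T.dist u u = T.dist n u + 1 := h
  rw [SimpleGraph.dist_self] at h1
  omega

lemma branch_disjoint_s5 (hT : T.IsTree) {u n₁ n₂ w : V} (h₁ : T.Adj u n₁) (h₂ : T.Adj u n₂)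
    (hw₁ : w ∈ Branch T u n₁) (hw₂ : w ∈ Branch T u n₂) : n₁ = n₂ := by
  have hwu : w ≠ u := fun he => notMem_branch_self T u n₁ (he ▸ hw₁)
  obtain ⟨p₁, hp₁⟩ := (branch_iff hT h₁ hwu).1 hw₁
  obtain ⟨p₂, hp₂⟩ := (branch_iff hT h₂ hwu).1 hw₂
  exact second_vertex_unique hT h₁ h₂ hp₁ hp₂

lemma exists_branch (hT : T.IsTree) {u w : V} (h : w ≠ u) :
    ∃ n, T.Adj u n ∧ w ∈ Branch T u n := by
  obtain ⟨p, hp⟩ := exists_path hT.isConnected u w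
  cases p with
  | nil => exact absurd rfl h
  | cons hadj q =>
    exact ⟨_, hadj, (branch_iff hT hadj h).2 ⟨q, hp⟩⟩

lemma isPath_concat {a b c : V} {p : T.Walk a b} (hp : p.IsPath) (h : T.Adj b c)
    (hc : c ∉ p.support) : (p.concat h).IsPath := by
  rw [← Walk.isPath_reverse_iff, Walk.reverse_concat]
  exact ((Walk.isPath_reverse_iff p).2 hp).cons (by simpa [Walk.support_reverse] using hc)

lemma branch_adj (hT : T.IsTree) {u n p q : V} (hun : T.Adj u n) (hp : p ∈ Branch T u n)
    (hpq : T.Adj p q) (hq : q ≠ u) : q ∈ Branch T u n := by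
  have hpu : p ≠ u := fun he => notMem_branch_self T u n (he ▸ hp)
  obtain ⟨p₁, hp₁⟩ := (branch_iff hT hun hpu).1 hp
  by_cases hqs : q ∈ p₁.support
  · refine (branch_iff hT hun hq).2 ⟨p₁.takeUntil q hqs, ?_⟩
    rw [Walk.cons_isPath_iff] at hp₁ ⊢
    exact ⟨hp₁.1.takeUntil hqs, fun hu => hp₁.2 (p₁.support_takeUntil_subset hqs hu)⟩
  · refine (branch_iff hT hun hq).2 ⟨p₁.concat hpq, ?_⟩
    rw [← Walk.concat_cons]
    refine isPath_concat hp₁ hpq ?_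
    rw [Walk.support_cons]
    simp only [List.mem_cons, not_or]
    exact ⟨hq, hqs⟩

lemma branch_of_walk (hT : T.IsTree) {u n a b : V} (h : T.Adj u n) (ha : a ∈ Branch T u n)
    (p : T.Walk a b) (hu : u ∉ p.support) : b ∈ Branch T u n := by
  induction p with
  | nil => exact ha
  | @cons a c b hadj q ih =>
    rw [Walk.support_cons] at hu
    simp only [List.mem_cons, not_or] at hu
    have hcu : c ≠ u := fun he => hu.2 (he ▸ q.start_mem_support)
    exact ih (branch_adj hT h ha hadj hcu) hu.2

lemma dist_branch_add (hT : T.IsTree) {u n₁ n₂ a b : V} (h₁ : T.Adj u n₁) (h₂ : T.Adj u n₂)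
    (hne : n₁ ≠ n₂) (ha : a ∈ Branch T u n₁) (hb : b ∈ Branch T u n₂) :
    T.dist a b = T.dist a u + T.dist u b := by
  obtain ⟨p, hp⟩ := exists_path hT.isConnected a b
  by_cases hu : u ∈ p.support
  · exact dist_add_of_mem_support hT hp hu
  · exact absurd (branch_disjoint_s5 hT h₁ h₂ (branch_of_walk hT h₁ ha p hu) hb) hne

/-- median of three vertices in a tree -/
lemma tree_median (hT : T.IsTree) (a b c : V) :
    ∃ m : V, T.dist a b = T.dist a m + T.dist m b ∧
      T.dist a c = T.dist a m + T.dist m c ∧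
      T.dist b c = T.dist b m + T.dist m c := by
  generalize hn : T.dist a b + T.dist a c = n
  induction n using Nat.strong_induction_on generalizing a with
  | _ n ih =>
    by_cases hab : a = b
    · subst hab
      exact ⟨a, by simp, by simp, by simp⟩
    by_cases hac : a = c
    · subst hac
      exact ⟨a, by simp, by simp, by simp⟩
    obtain ⟨nb, hnb, hmb⟩ := exists_branch hT (Ne.symm hab)
    obtain ⟨nc, hnc, hmc⟩ := exists_branch hT (Ne.symm hac)
    have hb' : T.dist a b = T.dist nb b + 1 := hmb
    have hc' : T.dist a c = T.dist nc c + 1 := hmc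
    by_cases he : nb = nc
    · subst he
      obtain ⟨m, e1, e2, e3⟩ := ih (T.dist nb b + T.dist nb c) (by omega) nb rfl
      have t1 : T.dist a m ≤ 1 + T.dist nb m := by
        have tt := hT.isConnected.dist_triangle (u := a) (v := nb) (w := m)
        have t1' : T.dist a nb = 1 := dist_eq_one_iff_adj.2 hnb
        omega
      refine ⟨m, ?_, ?_, e3⟩
      · have t2 : T.dist a b ≤ T.dist a m + T.dist m b := hT.isConnected.dist_triangle
        omega
      · have t2 : T.dist a c ≤ T.dist a m + T.dist m c := hT.isConnected.dist_triangle
        omega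
    · exact ⟨a, by simp, by simp, dist_branch_add hT hnb hnc he hmb hmc⟩

end TreeLemmas

section CoreLemmas

set_option linter.unusedSectionVars false

variable {T : SimpleGraph V} [DecidableRel T.Adj]

lemma mem_branch_ne {v z w : V} (h : w ∈ Branch T v z) : w ≠ v :=
  fun he => notMem_branch_self T v z (he ▸ h)

lemma three_le_degree_of_three_adj {m a b c : V} (hab : a ≠ b) (hac : a ≠ c) (hbc : b ≠ c)
    (h₁ : T.Adj m a) (h₂ : T.Adj m b) (h₃ : T.Adj m c) : 3 ≤ T.degree m := by
  have hsub : {a, b, c} ⊆ T.neighborFinset m := by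
    intro x hx
    simp only [Finset.mem_insert, Finset.mem_singleton] at hx
    rcases hx with rfl | rfl | rfl <;> simp [T.mem_neighborFinset, h₁, h₂, h₃]
  have hcard : ({a, b, c} : Finset V).card = 3 := by
    rw [Finset.card_insert_of_notMem (by simp [hab, hac]),
      Finset.card_insert_of_notMem (by simp [hbc]), Finset.card_singleton]
  calc 3 = ({a, b, c} : Finset V).card := hcard.symm
    _ ≤ (T.neighborFinset m).card := Finset.card_le_card hsub
    _ = T.degree m := T.card_neighborFinset_eq_degree m

/-- for a small core, any two cores other than it lie in a common branch. -/
lemma small_core_dir (hT : T.IsTree) {u : V} (hu : IsSmallCore T u) {w₁ w₂ : V}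
    (h₁ : w₁ ≠ u) (h₂ : w₂ ≠ u) (hc₁ : IsCore T w₁) (hc₂ : IsCore T w₂) :
    ∃ r, T.Adj u r ∧ w₁ ∈ Branch T u r ∧ w₂ ∈ Branch T u r := by
  obtain ⟨hdeg, x, y, hxy, hx, hy⟩ := hu
  obtain ⟨n₁, hn₁, hw₁⟩ := exists_branch hT h₁
  obtain ⟨n₂, hn₂, hw₂⟩ := exists_branch hT h₂
  have key : ∀ n (w : V), T.Adj u n → w ∈ Branch T u n → IsCore T w → n ≠ x ∧ n ≠ y := by
    intro n w hn hw hc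
    constructor
    · rintro rfl
      have := hx.1.2 w hw
      exact absurd hc (by simp only [IsCore]; omega)
    · rintro rfl
      have := hy.2 w hw
      exact absurd hc (by simp only [IsCore]; omega)
  obtain ⟨k₁x, k₁y⟩ := key n₁ w₁ hn₁ hw₁ hc₁
  obtain ⟨k₂x, k₂y⟩ := key n₂ w₂ hn₂ hw₂ hc₂
  have hn12 : n₁ = n₂ := by
    by_contra hne
    have hsub : {x, y, n₁, n₂} ⊆ T.neighborFinset u := by
      intro t ht
      simp only [Finset.mem_insert, Finset.mem_singleton] at ht
      rcases ht with rfl | rfl | rfl | rfl <;>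
        simp [T.mem_neighborFinset, hx.1.1, hy.1, hn₁, hn₂]
    have hcard : ({x, y, n₁, n₂} : Finset V).card = 4 := by
      rw [Finset.card_insert_of_notMem (by simp [hxy, Ne.symm k₁x, Ne.symm k₂x]),
        Finset.card_insert_of_notMem (by simp [Ne.symm k₁y, Ne.symm k₂y]),
        Finset.card_insert_of_notMem (by simp [hne]), Finset.card_singleton]
    have := Finset.card_le_card hsub
    rw [hcard, T.card_neighborFinset_eq_degree] at this
    omega
  exact ⟨n₁, hn₁, hw₁, hn12 ▸ hw₂⟩

/-- uniqueness of cores in a branch without regular cores. -/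
lemma core_unique_in_branch (hT : T.IsTree) {v z : V} (hvz : T.Adj v z) (hv : IsCore T v)
    (hnoreg : ∀ w ∈ Branch T v z, ¬ IsRegularCore T w) {u₁ u₂ : V}
    (h₁ : u₁ ∈ Branch T v z) (h₂ : u₂ ∈ Branch T v z)
    (c₁ : IsCore T u₁) (c₂ : IsCore T u₂) : u₁ = u₂ := by
  have small : ∀ w ∈ Branch T v z, IsCore T w → IsSmallCore T w := by
    intro w hw hc
    by_contra hns
    exact hnoreg w hw ⟨hc, hns⟩
  have s₁ : IsSmallCore T u₁ := small _ h₁ c₁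
  have s₂ : IsSmallCore T u₂ := small _ h₂ c₂
  by_contra h12
  have hvu₁ : v ≠ u₁ := fun he => mem_branch_ne h₁ he.symm
  have hvu₂ : v ≠ u₂ := fun he => mem_branch_ne h₂ he.symm
  obtain ⟨m, e₁, e₂, e₃⟩ := tree_median hT v u₁ u₂
  have hd₁ : T.dist v u₁ = T.dist z u₁ + 1 := h₁
  have hd₂ : T.dist v u₂ = T.dist z u₂ + 1 := h₂
  -- rule out m = v
  have hmv : m ≠ v := by
    rintro rfl
    have tri : T.dist u₁ u₂ ≤ T.dist u₁ z + T.dist z u₂ := hT.isConnected.dist_triangle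
    have c₁' : T.dist u₁ m = T.dist z u₁ + 1 := by
      rw [SimpleGraph.dist_comm (u := u₁) (v := m)]; exact hd₁
    have c₂' : T.dist m u₂ = T.dist z u₂ + 1 := hd₂
    have cz : T.dist u₁ z = T.dist z u₁ := SimpleGraph.dist_comm (u := u₁) (v := z)
    omega
  -- rule out m = u₁
  have hmu₁ : m ≠ u₁ := by
    rintro rfl
    obtain ⟨r, hr, hvr, hu₂r⟩ := small_core_dir hT s₁ hvu₁ (Ne.symm h12) hv c₂
    have d₁ : T.dist m v = T.dist r v + 1 := hvr
    have d₂ : T.dist m u₂ = T.dist r u₂ + 1 := hu₂r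
    have tri : T.dist v u₂ ≤ T.dist v r + T.dist r u₂ := hT.isConnected.dist_triangle
    have cm : T.dist v m = T.dist m v := SimpleGraph.dist_comm (u := v) (v := m)
    have cr : T.dist v r = T.dist r v := SimpleGraph.dist_comm (u := v) (v := r)
    omega
  -- rule out m = u₂
  have hmu₂ : m ≠ u₂ := by
    rintro rfl
    obtain ⟨r, hr, hvr, hu₁r⟩ := small_core_dir hT s₂ hvu₂ h12 hv c₁
    have d₁ : T.dist m v = T.dist r v + 1 := hvr
    have d₂ : T.dist m u₁ = T.dist r u₁ + 1 := hu₁r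
    have tri : T.dist v u₁ ≤ T.dist v r + T.dist r u₁ := hT.isConnected.dist_triangle
    have cm : T.dist u₁ m = T.dist m u₁ := SimpleGraph.dist_comm (u := u₁) (v := m)
    have cm2 : T.dist v m = T.dist m v := SimpleGraph.dist_comm (u := v) (v := m)
    have cr : T.dist v r = T.dist r v := SimpleGraph.dist_comm (u := v) (v := r)
    have cu : T.dist u₁ v = T.dist v u₁ := SimpleGraph.dist_comm (u := u₁) (v := v)
    omega
  -- m lies in the branch of z
  have hmz : m ∈ Branch T v z := by
    obtain ⟨n, hn, hmn⟩ := exists_branch hT hmv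
    have hnz : n = z := by
      by_contra hne
      have hsep : T.dist m u₁ = T.dist m v + T.dist v u₁ :=
        dist_branch_add hT hn hvz hne hmn h₁
      have hc : T.dist v m = T.dist m v := SimpleGraph.dist_comm (u := v) (v := m)
      have hd0 : T.dist v m = 0 := by omega
      exact hmv ((hT.isConnected.dist_eq_zero_iff).1 hd0).symm
    exact hnz ▸ hmn
  -- three distinct neighbors of m
  obtain ⟨nv, hnv, hvnv⟩ := exists_branch hT hmv.symm
  obtain ⟨n₁, hn₁, hu₁n⟩ := exists_branch hT (Ne.symm hmu₁)
  obtain ⟨n₂, hn₂, hu₂n⟩ := exists_branch hT (Ne.symm hmu₂)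
  have bv : T.dist m v = T.dist nv v + 1 := hvnv
  have b₁ : T.dist m u₁ = T.dist n₁ u₁ + 1 := hu₁n
  have b₂ : T.dist m u₂ = T.dist n₂ u₂ + 1 := hu₂n
  have cmv : T.dist v m = T.dist m v := SimpleGraph.dist_comm (u := v) (v := m)
  have c1m : T.dist u₁ m = T.dist m u₁ := SimpleGraph.dist_comm (u := u₁) (v := m)
  have hnv1 : nv ≠ n₁ := by
    rintro rfl
    have tri : T.dist v u₁ ≤ T.dist v nv + T.dist nv u₁ := hT.isConnected.dist_triangle
    have cv : T.dist v nv = T.dist nv v := SimpleGraph.dist_comm (u := v) (v := nv)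
    omega
  have hnv2 : nv ≠ n₂ := by
    rintro rfl
    have tri : T.dist v u₂ ≤ T.dist v nv + T.dist nv u₂ := hT.isConnected.dist_triangle
    have cv : T.dist v nv = T.dist nv v := SimpleGraph.dist_comm (u := v) (v := nv)
    omega
  have hn12' : n₁ ≠ n₂ := by
    rintro rfl
    have tri : T.dist u₁ u₂ ≤ T.dist u₁ n₁ + T.dist n₁ u₂ := hT.isConnected.dist_triangle
    have cv : T.dist u₁ n₁ = T.dist n₁ u₁ := SimpleGraph.dist_comm (u := u₁) (v := n₁)
    omega
  have hmc : IsCore T m := three_le_degree_of_three_adj hnv1 hnv2 hn12' hnv hn₁ hn₂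
  have hms : IsSmallCore T m := small m hmz hmc
  -- the short leg of m must be one of the three directions, but each contains a core
  obtain ⟨hdeg, x, y, hxy, hx, hy⟩ := hms
  have hsub : {nv, n₁, n₂} ⊆ T.neighborFinset m := by
    intro t ht
    simp only [Finset.mem_insert, Finset.mem_singleton] at ht
    rcases ht with rfl | rfl | rfl <;> simp [T.mem_neighborFinset, hnv, hn₁, hn₂]
  have hcard : ({nv, n₁, n₂} : Finset V).card = 3 := by
    rw [Finset.card_insert_of_notMem (by simp [hnv1, hnv2]),
      Finset.card_insert_of_notMem (by simp [hn12']), Finset.card_singleton]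
  have heq : {nv, n₁, n₂} = T.neighborFinset m := by
    apply Finset.eq_of_subset_of_card_le hsub
    rw [T.card_neighborFinset_eq_degree, hdeg, hcard]
  have hxmem : x ∈ ({nv, n₁, n₂} : Finset V) := by
    rw [heq]; exact (T.mem_neighborFinset m x).2 hx.1.1
  have hdegv : T.degree v ≤ 2 ∨ T.degree u₁ ≤ 2 ∨ T.degree u₂ ≤ 2 := by
    simp only [Finset.mem_insert, Finset.mem_singleton] at hxmem
    rcases hxmem with rfl | rfl | rfl
    · exact Or.inl (hx.1.2 v hvnv)
    · exact Or.inr (Or.inl (hx.1.2 u₁ hu₁n))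
    · exact Or.inr (Or.inr (hx.1.2 u₂ hu₂n))
  simp only [IsCore] at hv c₁ c₂
  omega

end CoreLemmas

section MainHelpers

set_option linter.unusedSectionVars false

variable {T : SimpleGraph V} [DecidableRel T.Adj]

lemma gleg_adj {v x : V} (h : IsGLeg T v x) : T.Adj v x := h.elim (·.1) (·.1)

lemma two_of_two_branches (hT : T.IsTree) {v x y : V} (hx : T.Adj v x) (hy : T.Adj v y)
    (hxy : x ≠ y) {S : Set V} (ha : (S ∩ Branch T v x).Nonempty)
    (hb : (S ∩ Branch T v y).Nonempty) : ∃ a ∈ S, ∃ b ∈ S, a ≠ b := by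
  obtain ⟨a, haS, haB⟩ := ha
  obtain ⟨b, hbS, hbB⟩ := hb
  refine ⟨a, haS, b, hbS, fun he => hxy ?_⟩
  exact branch_disjoint_s5 hT hx hy haB (he ▸ hbB)

lemma nonempty_of_sols {v x : V} {S : Set V}
    (h : SolS1 T v x S ∨ SolS2 T v x S ∨ SolS3 T v x S) :
    (S ∩ Branch T v x).Nonempty := by
  rcases h with ⟨w, hw, _⟩ | ⟨w₁, hw₁, _⟩ | h
  · exact ⟨w, by rw [hw]; exact rfl⟩
  · exact ⟨w₁, hw₁⟩
  · exact ⟨x, by rw [h]; exact rfl⟩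

lemma nonempty_of_msols {v x : V} {S : Set V}
    (h : SolM1 T v x S ∨ SolM2 T v x S ∨ SolM3 T v x S) :
    (S ∩ Branch T v x).Nonempty := by
  rcases h with ⟨u, a, b, _, hab⟩ | ⟨u, a, b, _, _, _, ⟨w₁, hw₁, _⟩, _⟩ | ⟨u, a, b, _, ⟨w₁, hw₁, _⟩, _⟩
  · rcases hab with h | h
    · exact ⟨a, by rw [h]; exact rfl⟩
    · exact ⟨b, by rw [h]; exact rfl⟩
  · exact ⟨w₁, hw₁⟩
  · exact ⟨w₁, hw₁⟩

lemma no_B (hT : T.IsTree) {v : V} (hv : IsMainCore T v)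
    (hmod : ∀ m : V, ¬ IsModifiedLeg T v m) {x y : V} (hxy : x ≠ y)
    (hx : IsShortLeg T v x) (hy : IsStandardLeg T v y)
    (hall : ∀ z : V, IsStandardLeg T v z → z = x ∨ z = y) : False := by
  obtain ⟨⟨hcore, hnotsmall⟩, hnotminor⟩ := hv
  have hdeg4 : 4 ≤ T.degree v := by
    rcases Nat.lt_or_ge (T.degree v) 4 with h | h
    · have hcore' : 3 ≤ T.degree v := hcore
      exact absurd ⟨by omega, x, y, hxy, hx, hy⟩ hnotsmall
    · exact h
  apply hnotminor
  refine ⟨⟨hcore, hnotsmall⟩, Or.inr ⟨hdeg4, hmod, ⟨x, y, hxy, hx, hy, hall⟩, ?_⟩⟩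
  intro z hz hngleg
  by_contra hno
  push_neg at hno
  have hnostd : ¬ IsStandardLeg T v z := fun h => hngleg (Or.inl h)
  have hcorez : ∃ w ∈ Branch T v z, IsCore T w := by
    by_contra hq
    push_neg at hq
    refine hnostd ⟨hz, fun w hw => ?_⟩
    have := hq w hw
    simp only [IsCore] at this
    omega
  obtain ⟨w, hwB, hwc⟩ := hcorez
  have hsmall : IsSmallCore T w := by
    by_contra hns; exact hno w hwB ⟨hwc, hns⟩
  exact hngleg (Or.inr ⟨hz, w, hwB, hsmall, fun w' hw' hc' =>
    core_unique_in_branch hT hz hcore hno hw' hwB hc' hwc⟩)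

end MainHelpers

/-- a local set of a main core has at least two vertices. -/
theorem local_set_of_main_core_has_two_vertices
    (T : SimpleGraph V) [DecidableRel T.Adj] (hT : T.IsTree)
    (v : V) (hv : IsMainCore T v)
    (S : Set V) (hS : IsLocalSet T v S) :
    ∃ a ∈ S, ∃ b ∈ S, a ≠ b := by
  obtain ⟨hsub, h1, h1', h2, h3, h4, h5⟩ := hS
  have hnA : ¬ ∀ x y : V, IsGLeg T v x → IsGLeg T v y → x = y :=
    fun hA => hv.2 ⟨hv.1, Or.inl hA⟩
  push_neg at hnA
  obtain ⟨x, y, hxg, hyg, hxy⟩ := hnA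
  by_cases hs0 : ∃ x₀ : V, IsStandardLeg T v x₀ ∧ SolS0 T v x₀ S
  · -- some standard leg has an empty solution
    obtain ⟨x₀, hx₀std, hx₀0⟩ := hs0
    by_cases hmod : ∃ m : V, IsModifiedLeg T v m
    · -- a modified leg: its solution is of type (m,2) or (m,3), both have two vertices
      obtain ⟨m, hm⟩ := hmod
      have hnm1 := h3 ⟨x₀, hx₀std, hx₀0⟩ m hm
      rcases h2 m hm with h | h | h
      · exact absurd h hnm1
      · obtain ⟨u, a, b, _, _, _, ⟨w₁, hw₁, w₂, hw₂, hne, _, _⟩, _⟩ := h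
        exact ⟨w₁, hw₁.1, w₂, hw₂.1, hne⟩
      · obtain ⟨u, a, b, _, ⟨w₁, hw₁, w₂, hw₂, hne⟩, _⟩ := h
        exact ⟨w₁, hw₁.1, w₂, hw₂.1, hne⟩
    · -- no modified legs: all g-legs are standard
      push_neg at hmod
      have hstdx : IsStandardLeg T v x := hxg.resolve_right (hmod x)
      have hstdy : IsStandardLeg T v y := hyg.resolve_right (hmod y)
      obtain ⟨y₀, hy₀std, hy₀ne⟩ : ∃ y₀ : V, IsStandardLeg T v y₀ ∧ y₀ ≠ x₀ := by
        by_cases hxx : x = x₀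
        · exact ⟨y, hstdy, fun he => hxy (by rw [hxx, he])⟩
        · exact ⟨x, hstdx, hxx⟩
      have hne_nonempty : ∀ z : V, IsStandardLeg T v z → z ≠ x₀ →
          (S ∩ Branch T v z).Nonempty := by
        intro z hz hzne
        rcases h1' z hz with h | h | h | h
        · exact (h1 z x₀ hz hx₀std hzne h hx₀0).elim
        · exact nonempty_of_sols (Or.inl h)
        · exact nonempty_of_sols (Or.inr (Or.inl h))
        · exact nonempty_of_sols (Or.inr (Or.inr h))
      by_cases htwo : ∃ z₁ z₂ : V, IsStandardLeg T v z₁ ∧ IsStandardLeg T v z₂ ∧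
          z₁ ≠ z₂ ∧ z₁ ≠ x₀ ∧ z₂ ≠ x₀
      · obtain ⟨z₁, z₂, hz₁, hz₂, hzz, hz₁x, hz₂x⟩ := htwo
        exact two_of_two_branches hT hz₁.1 hz₂.1 hzz
          (hne_nonempty _ hz₁ hz₁x) (hne_nonempty _ hz₂ hz₂x)
      · have hall : ∀ z : V, IsStandardLeg T v z → z = x₀ ∨ z = y₀ := by
          intro z hz
          by_contra hc
          push_neg at hc
          exact htwo ⟨z, y₀, hz, hy₀std, hc.2, hc.1, hy₀ne⟩
        have hy₀notS0 : ¬ SolS0 T v y₀ S := fun h => h1 y₀ x₀ hy₀std hx₀std hy₀ne h hx₀0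
        have hsing : SolS2 T v y₀ S ∨ ∃ w : V, S ∩ Branch T v y₀ = {w} := by
          rcases h1' y₀ hy₀std with h | h | h | h
          · exact (hy₀notS0 h).elim
          · exact Or.inr ⟨h.choose, h.choose_spec.1⟩
          · exact Or.inl h
          · exact Or.inr ⟨y₀, h⟩
        rcases hsing with h | ⟨w₀, hw₀⟩
        · obtain ⟨w₁, hw₁, w₂, hw₂, hne⟩ := h
          exact ⟨w₁, hw₁.1, w₂, hw₂.1, hne⟩
        · exfalso
          by_cases hx₀short : Branch T v x₀ = {x₀}
          · exact no_B hT hv hmod (Ne.symm hy₀ne) ⟨hx₀std, hx₀short⟩ hy₀std hall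
          · have hx₀long : IsLongLeg T v x₀ := ⟨hx₀std, hx₀short⟩
            by_cases hy₀short : Branch T v y₀ = {y₀}
            · exact no_B hT hv hmod hy₀ne ⟨hy₀std, hy₀short⟩ hx₀std
                (fun z hz => (hall z hz).symm)
            · have hy₀long : IsLongLeg T v y₀ := ⟨hy₀std, hy₀short⟩
              obtain ⟨w₁, hw₁, w₂, hw₂, hne⟩ := h4 x₀ hx₀long hx₀0 y₀ hy₀long hy₀ne
              rw [hw₀] at hw₁ hw₂
              exact hne (hw₁.trans hw₂.symm)
  · -- no standard leg has an empty solution: both g-legs are nonempty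
    push_neg at hs0
    have key : ∀ w : V, IsGLeg T v w → (S ∩ Branch T v w).Nonempty := by
      intro w hw
      rcases hw with hstd | hmd
      · rcases h1' w hstd with h | h | h | h
        · exact absurd h (hs0 w hstd)
        · exact nonempty_of_sols (Or.inl h)
        · exact nonempty_of_sols (Or.inr (Or.inl h))
        · exact nonempty_of_sols (Or.inr (Or.inr h))
      · exact nonempty_of_msols (h2 w hmd)
    exact two_of_two_branches hT (gleg_adj hxg) (gleg_adj hyg) hxy (key x hxg) (key y hyg)
end
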